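/- arXiv:1009.0029 — 8 statements merged into one kernel-verified Lean document; each statement's English description precedes it below -/
import Mathlib

section
/- Let K be a field, Q a finite acyclic quiver, and x, y vertices of Q. For each vertex w set c_w = n_{xw}·n_{yw} − Σ_{α ∈ Q₁ with t(α) = w} n_{x,s(α)}·n_{y,s(α)}. Then every c_w is a nonnegative integer, and there is an isomorphism of representations P(x) ⊗ P(y) ≅ ⊕_{w ∈ Q₀} P(w)^{⊕ c_w}. -/
/-!
Evaluated at a vertex `z`, `P(x) ⊗ P(y)` is the free module on pairs of paths `x → z`, `y → z`,
i.e. the linearization of the functor `z ↦ Path x z × Path y z`. Call a pair of paths into `w`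
primitive if the two paths do not end with a common arrow. Every pair of paths into `z` is
uniquely a primitive pair into some `w` followed by one common path `w → z`, so that functor is
the coproduct of the corepresentable functors `z ↦ Path w z`, one for each primitive pair into
`w`. Linearization is monoidal and a left adjoint, so it turns this into
`P(x) ⊗ P(y) ≅ ∐ P(w)`. A non-primitive pair into `w` is a pair into the source of an arrow
`α` into `w`, extended by `α`; counting gives `c_w`.
-/

open CategoryTheory MonoidalCategory Limits

noncomputable instance (K : Type) [Field K] (V : Type) [Quiver V] :
    HasFiniteBiproducts (Paths V ⥤ ModuleCat K) :=
  HasFiniteBiproducts.of_hasFiniteProducts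

/-- The indecomposable projective representation `P(x)`: at a vertex `z` it is the free
`K`-module on the set of paths from `x` to `z`, and a path acts by concatenation. -/
noncomputable def stdProj (K : Type) [Field K] {V : Type} [Quiver V] (x : V) :
    Paths V ⥤ ModuleCat K :=
  Paths.lift
    { obj := fun z => ModuleCat.of K (Quiver.Path x z →₀ K)
      map := fun {a b} α =>
        ModuleCat.ofHom (Finsupp.lmapDomain K K (fun p : Quiver.Path x a => p.cons α) :
          (Quiver.Path x a →₀ K) →ₗ[K] (Quiver.Path x b →₀ K)) }

namespace Quiver

variable {V : Type*} [Quiver V]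

lemma wellFounded_of_acyclic [Finite V] (hacyclic : ∀ (v : V) (p : Path v v), p.length = 0) :
    WellFounded fun a b : V => ∃ p : Path a b, 0 < p.length := by
  have : IsTrans V fun a b => ∃ p : Path a b, 0 < p.length :=
    ⟨fun _ _ _ ⟨p, hp⟩ ⟨q, _⟩ => ⟨p.comp q, by rw [Path.length_comp]; omega⟩⟩
  have : Std.Irrefl fun a b : V => ∃ p : Path a b, 0 < p.length :=
    ⟨fun v ⟨p, hp⟩ => hp.ne' (hacyclic v p)⟩
  exact Finite.wellFounded_of_trans_of_irrefl _

namespace Path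

def unconsLast {a : V} : ∀ {b : V}, Path a b → Option (Σ e : Σ c : V, (c ⟶ b), Path a e.1)
  | _, nil => none
  | _, cons p e => some ⟨⟨_, e⟩, p⟩

lemma unconsLast_injective {a b : V} : Function.Injective (unconsLast : Path a b → _) := by
  rintro (_ | ⟨p, e⟩) (_ | ⟨p', e'⟩) h <;> cases h <;> rfl

end Path

lemma finite_path_of_acyclic [Finite V] [∀ a b : V, Finite (a ⟶ b)]
    (hacyclic : ∀ (v : V) (p : Path v v), p.length = 0) (a b : V) : Finite (Path a b) := by
  induction b using (wellFounded_of_acyclic hacyclic).induction with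
  | _ b ih =>
    have : ∀ e : Σ c : V, (c ⟶ b), Finite (Path a e.1) := fun e => ih e.1 ⟨e.2.toPath, one_pos⟩
    exact Finite.of_injective _ Path.unconsLast_injective

namespace Path

def consPair {x y w : V} :
    (Σ e : Σ z : V, (z ⟶ w), Path x e.1 × Path y e.1) → Path x w × Path y w :=
  fun s => (s.2.1.cons s.1.2, s.2.2.cons s.1.2)

lemma consPair_injective {x y w : V} :
    Function.Injective (consPair : _ → Path x w × Path y w) := by
  rintro ⟨⟨z, e⟩, p, q⟩ ⟨⟨z', e'⟩, p', q'⟩ h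
  obtain ⟨hp, hq⟩ := Prod.mk.inj h
  cases hp
  cases hq
  rfl

def primPairs (x y w : V) : Set (Path x w × Path y w) := (Set.range consPair)ᶜ

lemma card_mul_card_eq_card_primPairs_add_sum [Fintype V] [∀ a b : V, Fintype (a ⟶ b)]
    [∀ a b : V, Finite (Path a b)] (x y w : V) :
    Nat.card (Path x w) * Nat.card (Path y w) =
      Nat.card (primPairs x y w) +
        ∑ e : Σ z : V, (z ⟶ w), Nat.card (Path x e.1) * Nat.card (Path y e.1) := by
  rw [← Nat.card_prod, ← Set.ncard_add_ncard_compl (Set.range consPair),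
    Set.ncard_range_of_injective consPair_injective, Nat.card_sigma, add_comm, primPairs,
    Nat.card_coe_set_eq]
  simp only [Nat.card_prod]

lemma comp_cons_mem_range_consPair {x y w z z' : V} (pq : Path x w × Path y w)
    (r : Path w z) (e : z ⟶ z') :
    (pq.1.comp (r.cons e), pq.2.comp (r.cons e)) ∈ Set.range consPair :=
  ⟨⟨⟨z, e⟩, pq.1.comp r, pq.2.comp r⟩, rfl⟩

def compPair (x y z : V) : (Σ i : Σ w, primPairs x y w, Path i.1 z) → Path x z × Path y z :=
  fun s => (s.1.2.1.1.comp s.2, s.1.2.1.2.comp s.2)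

lemma compPair_comp {x y z z' : V} (s : Σ i : Σ w, primPairs x y w, Path i.1 z)
    (f : Path z z') :
    compPair x y z' ⟨s.1, s.2.comp f⟩ =
      ((compPair x y z s).1.comp f, (compPair x y z s).2.comp f) := by
  simp only [compPair, comp_assoc]

lemma compPair_injective (x y z : V) : Function.Injective (compPair x y z) := by
  rintro ⟨⟨w, pq, hpq⟩, r⟩ ⟨⟨w', pq', hpq'⟩, r'⟩ h
  simp only [compPair, Prod.mk.injEq] at h
  obtain ⟨h₁, h₂⟩ := h
  induction r with
  | nil =>
    cases r' with
    | nil =>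
      obtain rfl : pq = pq' := Prod.ext h₁ h₂
      rfl
    | cons r' e =>
      rw [show pq = (pq'.1.comp (r'.cons e), pq'.2.comp (r'.cons e)) from Prod.ext h₁ h₂] at hpq
      exact (hpq (comp_cons_mem_range_consPair pq' r' e)).elim
  | cons r e ih =>
    cases r' with
    | nil =>
      rw [show pq' = (pq.1.comp (r.cons e), pq.2.comp (r.cons e)) from (Prod.ext h₁ h₂).symm]
        at hpq'
      exact (hpq' (comp_cons_mem_range_consPair pq r e)).elim
    | cons r' e' =>
      obtain rfl := obj_eq_of_cons_eq_cons h₁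
      obtain rfl := eq_of_heq (hom_heq_of_cons_eq_cons h₁)
      exact congrArg (fun s : Σ i : Σ w, primPairs x y w, Path i.1 _ =>
          (⟨s.1, s.2.cons e⟩ : Σ i : Σ w, primPairs x y w, Path i.1 _))
        (ih r' (eq_of_heq (heq_of_cons_eq_cons h₁)) (eq_of_heq (heq_of_cons_eq_cons h₂)))

lemma compPair_surjective (x y z : V) : Function.Surjective (compPair x y z) := by
  rintro ⟨p, q⟩
  induction p with
  | nil =>
    exact ⟨⟨⟨x, (nil, q), fun ⟨_, h⟩ => nil_ne_cons _ _ (Prod.mk.inj h).1.symm⟩, nil⟩, rfl⟩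
  | cons p e ih =>
    by_cases hpq : (p.cons e, q) ∈ Set.range consPair
    · obtain ⟨⟨⟨_, e'⟩, p', q'⟩, h⟩ := hpq
      simp only [consPair, Prod.mk.injEq] at h
      obtain ⟨hp, rfl⟩ := h
      obtain rfl := obj_eq_of_cons_eq_cons hp
      obtain rfl := eq_of_heq (hom_heq_of_cons_eq_cons hp)
      obtain rfl := eq_of_heq (heq_of_cons_eq_cons hp)
      obtain ⟨s, hs⟩ := ih q'
      exact ⟨⟨s.1, s.2.comp e'.toPath⟩, by rw [compPair_comp, hs]; rfl⟩
    · exact ⟨⟨⟨_, _, hpq⟩, nil⟩, rfl⟩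

end Path

end Quiver

section SigmaCoyoneda

universe v u

variable {C : Type u} [Category.{v} C] {ι : Type v} (t : ι → C)

def sigmaCoyoneda : C ⥤ Type v where
  obj z := Σ i, (t i ⟶ z)
  map f := TypeCat.ofHom fun s => ⟨s.1, s.2 ≫ f⟩

def sigmaCoyonedaCofan : Cofan fun i => coyoneda.obj (Opposite.op (t i)) :=
  Cofan.mk (sigmaCoyoneda t) fun i => { app := fun _ => TypeCat.ofHom fun r => ⟨i, r⟩ }

def isColimitSigmaCoyonedaCofan : IsColimit (sigmaCoyonedaCofan t) :=
  Cofan.IsColimit.mk _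
    (fun c =>
      { app := fun z => TypeCat.ofHom fun s => (c.inj s.1).app z s.2
        naturality := fun z z' f => by
          ext ⟨i, r⟩
          exact ConcreteCategory.congr_hom ((c.inj i).naturality f) r })
    (fun c i => by ext; rfl)
    (fun c m hm => by
      ext z ⟨i, r⟩
      exact ConcreteCategory.congr_hom (NatTrans.congr_app (hm i) z) r)

noncomputable def sigmaCoyonedaCompFreeIso (R : Type v) [Ring R] :
    sigmaCoyoneda t ⋙ ModuleCat.free R ≅
      ∐ fun i => coyoneda.obj (Opposite.op (t i)) ⋙ ModuleCat.free R :=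
  have : PreservesColimits (ModuleCat.free R) := (ModuleCat.adj R).leftAdjoint_preservesColimits
  IsColimit.coconePointUniqueUpToIso
    (isColimitCofanMkObjOfIsColimit ((Functor.whiskeringRight _ _ _).obj (ModuleCat.free R)) _ _
      (isColimitSigmaCoyonedaCofan t))
    (colimit.isColimit _)

end SigmaCoyoneda

section Paths

variable {V : Type} [Quiver.{0} V]

open Quiver.Path in
noncomputable def coyonedaTensorCoyonedaIso (x y : V) :
    coyoneda.obj (Opposite.op ((Paths.of V).obj x)) ⊗
        coyoneda.obj (Opposite.op ((Paths.of V).obj y)) ≅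
      sigmaCoyoneda fun i : Σ w, primPairs x y w => (Paths.of V).obj i.1 :=
  Iso.symm <| NatIso.ofComponents
    (fun z => (Equiv.ofBijective _ ⟨compPair_injective x y z, compPair_surjective x y z⟩).toIso)
    (fun f => by ext s; exact compPair_comp s f)

variable (K : Type) [Field K]

noncomputable def stdProjIsoCoyonedaCompFree (x : V) :
    stdProj K x ≅ coyoneda.obj (Opposite.op ((Paths.of V).obj x)) ⋙ ModuleCat.free K :=
  Paths.liftNatIso (fun _ => Iso.refl _) fun _ => by
    simp only [stdProj, Paths.lift_toPath, Iso.refl_hom]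
    rfl

noncomputable def stdProjTensorStdProjIso (x y : V) :
    stdProj K x ⊗ stdProj K y ≅ ∐ fun i : Σ w, Quiver.Path.primPairs x y w => stdProj K i.1 :=
  (stdProjIsoCoyonedaCompFree K x ⊗ᵢ stdProjIsoCoyonedaCompFree K y) ≪≫
    Functor.Monoidal.μIso ((Functor.whiskeringRight _ _ _).obj (ModuleCat.free K)) _ _ ≪≫
    Functor.isoWhiskerRight (coyonedaTensorCoyonedaIso x y) _ ≪≫
    sigmaCoyonedaCompFreeIso _ K ≪≫
    Sigma.mapIso fun i => (stdProjIsoCoyonedaCompFree K i.1).symm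

end Paths

/-- Clebsch-Gordan problem for projective representations of a finite
acyclic quiver: `P(x) ⊗ P(y) ≅ ⊕_w P(w)^{⊕ c_w}` where
`c_w = n_{xw} n_{yw} - ∑_{α : z → w} n_{xz} n_{yz}`, and each `c_w` is a nonnegative
integer. -/
theorem stdProj_tensor_stdProj
    (K : Type) [Field K] (V : Type) [Quiver V] [Fintype V]
    [∀ a b : V, Fintype (a ⟶ b)]
    (hacyclic : ∀ (v : V) (p : Quiver.Path v v), p.length = 0)
    (x y : V) :
    ∃ c : V → ℕ,
      (∀ w : V,
        (c w : ℤ) =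
          (Nat.card (Quiver.Path x w) : ℤ) * (Nat.card (Quiver.Path y w) : ℤ) -
            ∑ α : Σ z : V, (z ⟶ w),
              (Nat.card (Quiver.Path x α.1) : ℤ) * (Nat.card (Quiver.Path y α.1) : ℤ)) ∧
      Nonempty
        ((stdProj K x ⊗ stdProj K y) ≅ ⨁ fun i : Σ w : V, Fin (c w) => stdProj K i.1) := by
  have := Quiver.finite_path_of_acyclic hacyclic
  refine ⟨fun w => Nat.card (Quiver.Path.primPairs x y w), fun w => ?_, ⟨?_⟩⟩
  · rw [eq_sub_iff_add_eq]
    exact_mod_cast (Quiver.Path.card_mul_card_eq_card_primPairs_add_sum x y w).symm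
  · exact stdProjTensorStdProjIso K x y ≪≫
      Sigma.whiskerEquiv (g := fun i : Σ w, Fin _ => stdProj K i.1)
        (Equiv.sigmaCongrRight fun w => Finite.equivFin (Quiver.Path.primPairs x y w))
        (fun _ => Iso.refl _) ≪≫
      (biproduct.isoCoproduct fun i : Σ w, Fin _ => stdProj K i.1).symm
end

section
/- Let Q be a finite acyclic quiver and x, y, w vertices of Q. Then Σ_{α ∈ Q₁ with t(α) = w} n_{x,s(α)}·n_{y,s(α)} ≤ n_{x,w}·n_{y,w}. -/
/-!
The arrows `α : z ⟶ w` split the paths ending at `w` by their last arrow, so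
`∑_α n_{x,s(α)} ≤ n_{x,w}` (the missing term is the trivial path when `x = w`), and likewise
for `y`. The sum of products of nonnegative numbers is at most the product of the sums, which
gives the claim. Acyclicity only enters to make the path counts finite: arrows form a
well-founded relation on the finite vertex set, and by induction along it each vertex is
reached by finitely many paths.
-/

open Quiver Function

theorem Finset.sum_mul_le_sum_mul_sum {ι R : Type*} [CommSemiring R] [PartialOrder R]
    [IsOrderedRing R] (s : Finset ι) {f g : ι → R} (hf : ∀ i ∈ s, 0 ≤ f i)
    (hg : ∀ i ∈ s, 0 ≤ g i) :
    ∑ i ∈ s, f i * g i ≤ (∑ i ∈ s, f i) * ∑ i ∈ s, g i := by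
  rw [Finset.sum_mul]
  exact Finset.sum_le_sum fun i hi =>
    mul_le_mul_of_nonneg_left (Finset.single_le_sum hg hi) (hf i hi)

namespace Quiver

def IsAcyclic (V : Type*) [Quiver V] : Prop :=
  ∀ (v : V) (p : Path v v), p.length = 0

variable {V : Type*} [Quiver V]

theorem Path.sigma_cons_injective (x w : V) :
    Injective fun s : Σ α : Σ z : V, (z ⟶ w), Path x α.1 => s.2.cons s.1.2 := by
  rintro ⟨⟨z, α⟩, p⟩ ⟨⟨z', α'⟩, p'⟩ h
  obtain rfl : z = z' := Path.obj_eq_of_cons_eq_cons h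
  obtain rfl : α = α' := eq_of_heq (Path.hom_heq_of_cons_eq_cons h)
  obtain rfl : p = p' := eq_of_heq (Path.heq_of_cons_eq_cons h)
  rfl

theorem sum_natCard_path_le [Fintype V] [∀ a b : V, Fintype (a ⟶ b)] (x w : V)
    [Finite (Path x w)] :
    ∑ α : Σ z : V, (z ⟶ w), Nat.card (Path x α.1) ≤ Nat.card (Path x w) := by
  have hinj := Path.sigma_cons_injective x w
  have : Finite (Σ α : Σ z : V, (z ⟶ w), Path x α.1) := Finite.of_injective _ hinj
  have : ∀ α : Σ z : V, (z ⟶ w), Finite (Path x α.1) := fun α =>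
    Finite.of_injective (Sigma.mk (β := fun α : Σ z : V, (z ⟶ w) => Path x α.1) α)
      sigma_mk_injective
  rw [← Nat.card_sigma]
  exact Nat.card_le_card_of_injective _ hinj

theorem IsAcyclic.wellFounded_hom [Finite V] (h : IsAcyclic V) :
    WellFounded fun a b : V => Nonempty (a ⟶ b) := by
  let r : V → V → Prop := fun a b => ∃ p : Path a b, 0 < p.length
  have : IsTrans V r := ⟨fun _ _ _ ⟨p, hp⟩ ⟨q, _⟩ => ⟨p.comp q, by rw [Path.length_comp]; omega⟩⟩
  have : Std.Irrefl r := ⟨fun v ⟨p, hp⟩ => hp.ne' (h v p)⟩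
  exact Subrelation.wf (fun ⟨e⟩ => ⟨e.toPath, Nat.one_pos⟩)
    (Finite.wellFounded_of_trans_of_irrefl r)

theorem IsAcyclic.finite_path [Finite V] [∀ a b : V, Finite (a ⟶ b)] (h : IsAcyclic V)
    (x b : V) : Finite (Path x b) := by
  induction b using h.wellFounded_hom.induction with
  | _ b ih =>
    have : ∀ α : Σ z : V, (z ⟶ b), Finite (Path x α.1) := fun α => ih α.1 ⟨α.2⟩
    refine Finite.of_surjective
      (fun s : PLift (x = b) ⊕ Σ α : Σ z : V, (z ⟶ b), Path x α.1 =>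
        s.elim (fun h : PLift (x = b) => h.down ▸ Path.nil) fun s => s.2.cons s.1.2) ?_
    rintro (_ | ⟨q, e⟩)
    · exact ⟨.inl ⟨rfl⟩, rfl⟩
    · exact ⟨.inr ⟨⟨_, e⟩, q⟩, rfl⟩

end Quiver

/-- For a finite acyclic quiver and vertices `x, y, w`:
`∑_{α ∈ Q₁, t(α) = w} n_{x,s(α)} · n_{y,s(α)} ≤ n_{x,w} · n_{y,w}`,
where `n_{ab}` is the number of paths from `a` to `b`. -/
theorem sum_paths_mul_le
    (V : Type) [Quiver V] [Fintype V] [∀ a b : V, Fintype (a ⟶ b)]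
    (hacyclic : ∀ (v : V) (p : Quiver.Path v v), p.length = 0)
    (x y w : V) :
    ∑ α : Σ z : V, (z ⟶ w),
        Nat.card (Quiver.Path x α.1) * Nat.card (Quiver.Path y α.1) ≤
      Nat.card (Quiver.Path x w) * Nat.card (Quiver.Path y w) := by
  have : ∀ b, Finite (Path x b) := IsAcyclic.finite_path hacyclic x
  have : ∀ b, Finite (Path y b) := IsAcyclic.finite_path hacyclic y
  calc _ ≤ (∑ α : Σ z : V, (z ⟶ w), Nat.card (Path x α.1)) *
        ∑ α : Σ z : V, (z ⟶ w), Nat.card (Path y α.1) :=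
        Finset.sum_mul_le_sum_mul_sum _ (fun _ _ => Nat.zero_le _) fun _ _ => Nat.zero_le _
    _ ≤ _ := Nat.mul_le_mul (sum_natCard_path_le x w) (sum_natCard_path_le y w)
end

section
/- Let C be a finite acyclic category. Then there exists a function μ : C₀ × C₀ → ℤ such that μ(x,x) = 1 for every object x, and for all objects x, y one has Σ_{z ∈ C₀} [x,z]·μ(z,y) = (1 if x = y, else 0) and Σ_{z ∈ C₀} μ(x,z)·[z,y] = (1 if x = y, else 0). -/
/-!
Order the objects by reachability, which acyclicity makes a partial order, and extend it to a
linear order. The matrix `ζ(x, y) = [x, y]` is then upper unitriangular with respect to it, so it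
has determinant `1` and an integer inverse, which is again unitriangular. That inverse is the
Möbius function.
-/

open CategoryTheory

namespace Matrix

variable {n α R : Type*} [Fintype n] [LinearOrder α] [CommRing R]
  {M N : Matrix n n R} {b : n → α}

theorem BlockTriangular.det_eq_prod_diag_of_injective [DecidableEq n] (hM : M.BlockTriangular b)
    (hb : Function.Injective b) : M.det = ∏ i, M i i := by
  rw [hM.det, Finset.prod_image fun i _ j _ h => hb h]
  refine Finset.prod_congr rfl fun i _ => ?_
  let _ : Unique {k // b k = b i} := ⟨⟨⟨i, rfl⟩⟩, fun j => Subtype.ext (hb j.2)⟩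
  rw [det_unique, toSquareBlock_def]
  rfl

theorem BlockTriangular.mul_apply_self_of_injective (hM : M.BlockTriangular b)
    (hN : N.BlockTriangular b) (hb : Function.Injective b) (i : n) :
    (M * N) i i = M i i * N i i := by
  rw [mul_apply, Finset.sum_eq_single i]
  intro k _ hki
  rcases lt_or_gt_of_ne (hb.ne hki) with h | h
  · rw [hM h, zero_mul]
  · rw [hN h, mul_zero]
  · simp

variable [DecidableEq n]

theorem BlockTriangular.det_eq_one_of_injective (hM : M.BlockTriangular b)
    (hb : Function.Injective b) (hdiag : ∀ i, M i i = 1) : M.det = 1 := by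
  rw [hM.det_eq_prod_diag_of_injective hb]
  exact Finset.prod_eq_one fun i _ => hdiag i

theorem BlockTriangular.inv_apply_self_of_injective (hM : M.BlockTriangular b)
    (hb : Function.Injective b) (hdiag : ∀ i, M i i = 1) (i : n) : M⁻¹ i i = 1 := by
  have hdet : IsUnit M.det := by rw [hM.det_eq_one_of_injective hb hdiag]; exact isUnit_one
  have := M.invertibleOfIsUnitDet hdet
  have h := congr_fun₂ (M.mul_nonsing_inv hdet) i i
  rwa [hM.mul_apply_self_of_injective (blockTriangular_inv_of_blockTriangular hM) hb, hdiag,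
    one_mul, one_apply_eq] at h

end Matrix

namespace CategoryTheory

variable {C : Type*} [Category C]

abbrev reachabilityOrder (hendo : ∀ (x : C) (f : x ⟶ x), f = 𝟙 x)
    (hiso : ∀ x y : C, (x ≅ y) → x = y) : PartialOrder C where
  le x y := Nonempty (x ⟶ y)
  le_refl x := ⟨𝟙 x⟩
  le_trans _ _ _ f g := ⟨f.some ≫ g.some⟩
  le_antisymm x y f g := hiso x y ⟨f.some, g.some, hendo _ _, hendo _ _⟩

variable (C) [FinCategory C]

def zetaMatrix : Matrix C C ℤ := fun x y => Fintype.card (x ⟶ y)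

variable {C}

theorem zetaMatrix_blockTriangular {α : Type*} [Preorder α] (b : C → α)
    (hb : ∀ x y : C, Nonempty (x ⟶ y) → b x ≤ b y) : (zetaMatrix C).BlockTriangular b := by
  intro x y hyx
  have : IsEmpty (x ⟶ y) := ⟨fun f => (hyx.trans_le (hb x y ⟨f⟩)).false⟩
  simp [zetaMatrix]

theorem zetaMatrix_apply_self (hendo : ∀ (x : C) (f : x ⟶ x), f = 𝟙 x) (x : C) :
    zetaMatrix C x x = 1 := by
  have : Unique (x ⟶ x) := ⟨⟨𝟙 x⟩, hendo x⟩
  simp [zetaMatrix]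

end CategoryTheory

/-- A finite acyclic category admits a Möbius function: `μ(x,x) = 1` and
`∑_z [x,z]·μ(z,y) = δ_{xy} = ∑_z μ(x,z)·[z,y]`, where `[x,y]` is the number of morphisms
from `x` to `y`. -/
theorem exists_mobius_function
    (C : Type) [Category C] [FinCategory C] [DecidableEq C]
    (hendo : ∀ (x : C) (f : x ⟶ x), f = 𝟙 x)
    (hiso : ∀ x y : C, (x ≅ y) → x = y) :
    ∃ μ : C → C → ℤ,
      (∀ x : C, μ x x = 1) ∧
      (∀ x y : C,
        ∑ z : C, (Fintype.card (x ⟶ z) : ℤ) * μ z y = if x = y then 1 else 0) ∧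
      (∀ x y : C,
        ∑ z : C, μ x z * (Fintype.card (z ⟶ y) : ℤ) = if x = y then 1 else 0) := by
  let _ := reachabilityOrder hendo hiso
  have hζ : (zetaMatrix C).BlockTriangular toLinearExtension :=
    zetaMatrix_blockTriangular _ fun _ _ h => toLinearExtension.monotone h
  have hdiag := zetaMatrix_apply_self hendo
  have hdet : IsUnit (zetaMatrix C).det := by
    rw [hζ.det_eq_one_of_injective Function.injective_id hdiag]
    exact isUnit_one
  refine ⟨((zetaMatrix C)⁻¹ : Matrix C C ℤ),
    hζ.inv_apply_self_of_injective Function.injective_id hdiag, fun x y => ?_, fun x y => ?_⟩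
  · simpa only [zetaMatrix, Matrix.mul_apply, Matrix.one_apply] using
      congr_fun₂ (Matrix.mul_nonsing_inv _ hdet) x y
  · simpa only [zetaMatrix, Matrix.mul_apply, Matrix.one_apply] using
      congr_fun₂ (Matrix.nonsing_inv_mul _ hdet) x y
end

section
/- Let Q be a quiver, T a subquiver of Q, t a vertex of T, and (Q', f') a quiver over Q such that every vertex and every arrow in the image of f' belongs to T. Then restriction to vertices is a bijection from the set of morphisms of quivers over Q from (Q', f') to (P_{T,t}, π) onto the set of functions g₀ : Q'₀ → (P_{T,t})₀ satisfying (i) π(g₀(v)) = f'(v) for every vertex v of Q', and (ii) g₀(t(α')) = g₀(s(α'))·f'(α') (the concatenation of the path g₀(s(α')) with the arrow f'(α')) for every arrow α' of Q'. -/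
/-! ## Bundled quivers and quivers over a fixed quiver -/

/-- A (bundled) quiver: a set of vertices, a set of arrows, and source/target maps. -/
structure BQuiv : Type 1 where
  V : Type
  E : Type
  s : E → V
  t : E → V

namespace BQuiv

/-- A morphism of quivers (a "coloring"). -/
@[ext]
structure Hom (A B : BQuiv) where
  onV : A.V → B.V
  onE : A.E → B.E
  hs : ∀ e : A.E, B.s (onE e) = onV (A.s e)
  ht : ∀ e : A.E, B.t (onE e) = onV (A.t e)

/-- Composition of morphisms of quivers. -/
def Hom.comp {A B C : BQuiv} (f : Hom A B) (g : Hom B C) : Hom A C where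
  onV v := g.onV (f.onV v)
  onE e := g.onE (f.onE e)
  hs e := by rw [g.hs, f.hs]
  ht e := by rw [g.ht, f.ht]

/-- `Q.IsPathFrom a b es` : the list of edges `es` forms a path from `a` to `b` in `Q`. -/
def IsPathFrom (Q : BQuiv) : Q.V → Q.V → List Q.E → Prop
  | a, b, [] => a = b
  | a, b, e :: es => Q.s e = a ∧ Q.IsPathFrom (Q.t e) b es

theorem IsPathFrom.snoc {Q : BQuiv} {a b : Q.V} {es : List Q.E}
    (h : Q.IsPathFrom a b es) {e : Q.E} (he : Q.s e = b) :
    Q.IsPathFrom a (Q.t e) (es ++ [e]) := by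
  induction es generalizing a with
  | nil =>
      simp only [IsPathFrom] at h
      subst h
      exact ⟨he, rfl⟩
  | cons f fs ih =>
      obtain ⟨h1, h2⟩ := h
      exact ⟨h1, ih h2⟩

theorem IsPathFrom.append {Q : BQuiv} {a b c : Q.V} {es fs : List Q.E}
    (h : Q.IsPathFrom a b es) (h' : Q.IsPathFrom b c fs) :
    Q.IsPathFrom a c (es ++ fs) := by
  induction es generalizing a with
  | nil =>
      simp only [IsPathFrom] at h
      subst h
      exact h'
  | cons f gs ih =>
      obtain ⟨h1, h2⟩ := h
      exact ⟨h1, ih h2⟩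

/-- `Q` is acyclic if every path from a vertex to itself is trivial. -/
def IsAcyclic (Q : BQuiv) : Prop :=
  ∀ (v : Q.V) (es : List Q.E), Q.IsPathFrom v v es → es = []

/-! ## Subquivers -/

/-- A subquiver of `Q`: a subset of vertices and a subset of arrows with endpoints in it. -/
structure Sub (Q : BQuiv) where
  verts : Set Q.V
  edges : Set Q.E
  src_mem : ∀ e ∈ edges, Q.s e ∈ verts
  tgt_mem : ∀ e ∈ edges, Q.t e ∈ verts

/-- The quiver underlying a subquiver. -/
def Sub.toBQuiv {Q : BQuiv} (T : Sub Q) : BQuiv where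
  V := T.verts
  E := T.edges
  s e := ⟨Q.s e.1, T.src_mem e.1 e.2⟩
  t e := ⟨Q.t e.1, T.tgt_mem e.1 e.2⟩

/-- The inclusion of a subquiver; `E_T` is `(T.toBQuiv, T.incl)` as a quiver over `Q`. -/
def Sub.incl {Q : BQuiv} (T : Sub Q) : Hom T.toBQuiv Q where
  onV := Subtype.val
  onE := Subtype.val
  hs _ := rfl
  ht _ := rfl

/-- `T.IsPathIn a b es` : `es` is a path from `a` to `b` lying entirely in the
subquiver `T`. -/
def Sub.IsPathIn {Q : BQuiv} (T : Sub Q) (a b : Q.V) (es : List Q.E) : Prop :=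
  a ∈ T.verts ∧ Q.IsPathFrom a b es ∧ ∀ e ∈ es, e ∈ T.edges

/-- Intersection of subquivers. -/
def Sub.inter {Q : BQuiv} (S T : Sub Q) : Sub Q where
  verts := S.verts ∩ T.verts
  edges := S.edges ∩ T.edges
  src_mem e he := ⟨S.src_mem e he.1, T.src_mem e he.2⟩
  tgt_mem e he := ⟨S.tgt_mem e he.1, T.tgt_mem e he.2⟩

/-- The full subquiver (all of `Q`). -/
def fullSub (Q : BQuiv) : Sub Q where
  verts := Set.univ
  edges := Set.univ
  src_mem _ _ := trivial
  tgt_mem _ _ := trivial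

/-- `S ⊆ T` for subquivers. -/
def Sub.le {Q : BQuiv} (S T : Sub Q) : Prop :=
  S.verts ⊆ T.verts ∧ S.edges ⊆ T.edges

/-- The successor closure of a vertex `j` in a subquiver `U`: the vertices of `U`
reachable from `j` by a path in `U`, together with all arrows of `U` between them. -/
def succClosure {Q : BQuiv} (U : Sub Q) (j : Q.V) : Sub Q where
  verts := {v | ∃ es, U.IsPathIn j v es}
  edges := {e | e ∈ U.edges ∧ (∃ es, U.IsPathIn j (Q.s e) es) ∧ ∃ es, U.IsPathIn j (Q.t e) es}
  src_mem _ he := he.2.1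
  tgt_mem _ he := he.2.2

/-- `s₀` is the unique source of the subquiver `S`. -/
def Sub.IsUniqueSource {Q : BQuiv} (S : Sub Q) (s₀ : Q.V) : Prop :=
  s₀ ∈ S.verts ∧ (∀ e ∈ S.edges, Q.t e ≠ s₀) ∧
    ∀ v ∈ S.verts, (∀ e ∈ S.edges, Q.t e ≠ v) → v = s₀

/-- `u₀` is the unique sink of the subquiver `S`. -/
def Sub.IsUniqueSink {Q : BQuiv} (S : Sub Q) (u₀ : Q.V) : Prop :=
  u₀ ∈ S.verts ∧ (∀ e ∈ S.edges, Q.s e ≠ u₀) ∧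
    ∀ v ∈ S.verts, (∀ e ∈ S.edges, Q.s e ≠ v) → v = u₀

/-! ## Path and copath quivers -/

/-- The path quiver `P_{T,t}`: vertices are the paths in `T` starting at `t` (recorded as
a pair (endpoint, list of edges)); there is one arrow `p ⟶ p·α` for each path-vertex `p`
and each arrow `α` of `T` starting at the endpoint of `p`. -/
def PathQ {Q : BQuiv} (T : Sub Q) (t : Q.V) : BQuiv where
  V := {x : Q.V × List Q.E // T.IsPathIn t x.1 x.2}
  E := {y : (Q.V × List Q.E) × Q.E //
        T.IsPathIn t y.1.1 y.1.2 ∧ y.2 ∈ T.edges ∧ Q.s y.2 = y.1.1}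
  s y := ⟨y.1.1, y.2.1⟩
  t y := ⟨(Q.t y.1.2, y.1.1.2 ++ [y.1.2]),
    ⟨y.2.1.1, (y.2.1.2.1).snoc y.2.2.2, by
      intro e he
      rcases List.mem_append.1 he with h | h
      · exact y.2.1.2.2 e h
      · rw [List.mem_singleton.1 h]; exact y.2.2.1⟩⟩

/-- The structure map of the path quiver `P_{T,t}` as a quiver over `Q`: a path is sent
to its terminal vertex, and the arrow `(p, α)` to `α`. -/
def pathPi {Q : BQuiv} (T : Sub Q) (t : Q.V) : Hom (PathQ T t) Q where
  onV p := p.1.1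
  onE y := y.1.2
  hs y := y.2.2.2
  ht _ := rfl

/-- The copath quiver `I_{T,u}`: vertices are the paths in `T` ending at `u` (recorded as
a pair (starting vertex, list of edges)); there is one arrow `α·q ⟶ q` for each vertex `q`
and each arrow `α` of `T` ending at the starting vertex of `q`. -/
def CoPathQ {Q : BQuiv} (T : Sub Q) (u : Q.V) : BQuiv where
  V := {x : Q.V × List Q.E // T.IsPathIn x.1 u x.2}
  E := {y : Q.E × (Q.V × List Q.E) //
        T.IsPathIn y.2.1 u y.2.2 ∧ y.1 ∈ T.edges ∧ Q.t y.1 = y.2.1}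
  s y := ⟨(Q.s y.1.1, y.1.1 :: y.1.2.2),
    ⟨T.src_mem _ y.2.2.1, ⟨rfl, by rw [y.2.2.2]; exact y.2.1.2.1⟩, by
      intro e he
      rcases List.mem_cons.1 he with h | h
      · rw [h]; exact y.2.2.1
      · exact y.2.1.2.2 e h⟩⟩
  t y := ⟨y.1.2, y.2.1⟩

/-- The structure map of the copath quiver `I_{T,u}` as a quiver over `Q`: a path is sent
to its starting vertex, and the arrow `(α, q)` to `α`. -/
def coPathPi {Q : BQuiv} (T : Sub Q) (u : Q.V) : Hom (CoPathQ T u) Q where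
  onV p := p.1.1
  onE y := y.1.1
  hs _ := rfl
  ht y := y.2.2.2

/-! ## Fiber products -/

/-- The fiber product of two quivers over `Q`. -/
def Fib {Q Q' Q'' : BQuiv} (f' : Hom Q' Q) (f'' : Hom Q'' Q) : BQuiv where
  V := {p : Q'.V × Q''.V // f'.onV p.1 = f''.onV p.2}
  E := {e : Q'.E × Q''.E // f'.onE e.1 = f''.onE e.2}
  s e := ⟨(Q'.s e.1.1, Q''.s e.1.2), by rw [← f'.hs, ← f''.hs, e.2]⟩
  t e := ⟨(Q'.t e.1.1, Q''.t e.1.2), by rw [← f'.ht, ← f''.ht, e.2]⟩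

/-- The structure map of the fiber product as a quiver over `Q`. -/
def fibHom {Q Q' Q'' : BQuiv} (f' : Hom Q' Q) (f'' : Hom Q'' Q) : Hom (Fib f' f'') Q where
  onV p := f'.onV p.1.1
  onE e := f'.onE e.1.1
  hs e := f'.hs e.1.1
  ht e := f'.ht e.1.1

/-! ## Connected components -/

/-- Adjacency in the underlying undirected graph. -/
def Adj (X : BQuiv) (v w : X.V) : Prop :=
  ∃ e : X.E, (X.s e = v ∧ X.t e = w) ∨ (X.s e = w ∧ X.t e = v)

/-- Connectivity in the underlying undirected graph. -/
def Conn (X : BQuiv) : X.V → X.V → Prop :=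
  Relation.ReflTransGen (Adj X)

/-- The connected component of the vertex `v₀` in `X`, as a quiver. -/
def Component (X : BQuiv) (v₀ : X.V) : BQuiv where
  V := {v : X.V // Conn X v₀ v}
  E := {e : X.E // Conn X v₀ (X.s e)}
  s e := ⟨X.s e.1, e.2⟩
  t e := ⟨X.t e.1, e.2.tail ⟨e.1, Or.inl ⟨rfl, rfl⟩⟩⟩

/-- The inclusion of a connected component. -/
def Component.incl (X : BQuiv) (v₀ : X.V) : Hom (Component X v₀) X where
  onV := Subtype.val
  onE := Subtype.val
  hs _ := rfl
  ht _ := rfl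

/-- A connected component of a quiver over `Q`, regarded as a quiver over `Q` via the
restricted structure map. -/
def componentHom {X Q : BQuiv} (h : Hom X Q) (v₀ : X.V) : Hom (Component X v₀) Q :=
  (Component.incl X v₀).comp h

/-! ## Isomorphisms over `Q` and wrappings -/

/-- An isomorphism of quivers over `Q`: a morphism of quivers commuting with the
structure maps which is bijective on vertices and on arrows. -/
structure OverIso {A B Q : BQuiv} (f : Hom A Q) (g : Hom B Q) where
  hom : Hom A B
  comm : hom.comp g = f
  bijV : Function.Bijective hom.onV
  bijE : Function.Bijective hom.onE

/-- A morphism of quivers is a wrapping if it is injective on parallel arrows. -/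
def IsWrapping {A B : BQuiv} (f : Hom A B) : Prop :=
  ∀ e₁ e₂ : A.E, A.s e₁ = A.s e₂ → A.t e₁ = A.t e₂ → f.onE e₁ = f.onE e₂ → e₁ = e₂

/-! ## Linear quivers tracing a path -/

/-- The linear quiver with vertices `0, 1, …, n` and one arrow `k-1 ⟶ k` for `1 ≤ k ≤ n`. -/
def LinQ (n : ℕ) : BQuiv where
  V := Fin (n + 1)
  E := Fin n
  s := Fin.castSucc
  t := Fin.succ

/-- The vertex reached after `k` steps along a list of edges starting at `a`. -/
def vertAt (Q : BQuiv) : Q.V → List Q.E → ℕ → Q.V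
  | a, _, 0 => a
  | a, [], _ + 1 => a
  | _, e :: es, k + 1 => vertAt Q (Q.t e) es k

theorem vertAt_s {Q : BQuiv} {a b : Q.V} {es : List Q.E} (h : Q.IsPathFrom a b es)
    (k : Fin es.length) : Q.s (es.get k) = vertAt Q a es k.1 := by
  induction es generalizing a with
  | nil => exact absurd k.2 (by simp)
  | cons e es ih =>
      obtain ⟨h1, h2⟩ := h
      rcases k with ⟨k, hk⟩
      cases k with
      | zero => exact h1
      | succ k => exact ih h2 ⟨k, Nat.lt_of_succ_lt_succ hk⟩

theorem vertAt_t {Q : BQuiv} {a b : Q.V} {es : List Q.E} (h : Q.IsPathFrom a b es)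
    (k : Fin es.length) : Q.t (es.get k) = vertAt Q a es (k.1 + 1) := by
  induction es generalizing a with
  | nil => exact absurd k.2 (by simp)
  | cons e es ih =>
      obtain ⟨h1, h2⟩ := h
      rcases k with ⟨k, hk⟩
      cases k with
      | zero =>
          cases es with
          | nil => rfl
          | cons f fs => exact (vertAt_s h2 ⟨0, by simp⟩) ▸ (h2.1).symm ▸ rfl
      | succ k => exact ih h2 ⟨k, Nat.lt_of_succ_lt_succ hk⟩

/-- The linear quiver of length `es.length` tracing the path `es` from `a` to `b`,
as a quiver over `Q`. -/
def traceHom (Q : BQuiv) (a b : Q.V) (es : List Q.E) (h : Q.IsPathFrom a b es) :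
    Hom (LinQ es.length) Q where
  onV k := vertAt Q a es k.1
  onE k := es.get k
  hs k := vertAt_s h k
  ht k := vertAt_t h k

end BQuiv

open BQuiv

/-! An arrow of `P_{T,t}` is the pair `(p, α)` of its source and its image in `Q`, so a morphism
over `Q` into `P_{T,t}` is determined by its vertex map. Conversely, a vertex map `g₀`
satisfying (i) and (ii) extends to arrows by `α' ↦ (g₀ (s α'), f' α')`: condition (i) makes
this an arrow of `P_{T,t}` with source `g₀ (s α')`, and (ii) says its target is `g₀ (t α')`. -/

namespace BQuiv.PathQ

variable {Q Q' : BQuiv} {f' : Hom Q' Q} {T : Sub Q} {t : Q.V}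

theorem hom_onE_val {g : Hom Q' (PathQ T t)} (hg : g.comp (pathPi T t) = f') (e : Q'.E) :
    (g.onE e).1 = ((g.onV (Q'.s e)).1, f'.onE e) :=
  Prod.ext (congrArg Subtype.val (g.hs e)) (congrFun (congrArg Hom.onE hg) e)

theorem hom_ext_of_onV {g g' : Hom Q' (PathQ T t)} (hg : g.comp (pathPi T t) = f')
    (hg' : g'.comp (pathPi T t) = f') (h : g.onV = g'.onV) : g = g' := by
  ext e
  · rw [h]
  · exact Subtype.ext (by rw [hom_onE_val hg, hom_onE_val hg', h])

theorem hom_onV_val_fst {g : Hom Q' (PathQ T t)} (hg : g.comp (pathPi T t) = f') (v : Q'.V) :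
    (g.onV v).1.1 = f'.onV v :=
  congrFun (congrArg Hom.onV hg) v

theorem hom_onV_target_val {g : Hom Q' (PathQ T t)} (hg : g.comp (pathPi T t) = f')
    (e : Q'.E) :
    (g.onV (Q'.t e)).1 = (Q.t (f'.onE e), (g.onV (Q'.s e)).1.2 ++ [f'.onE e]) := by
  rw [← congrArg Subtype.val (g.ht e)]
  simp only [PathQ, hom_onE_val hg]

def homOfOnV (himgE : ∀ e : Q'.E, f'.onE e ∈ T.edges) (g₀ : Q'.V → (PathQ T t).V)
    (hV : ∀ v : Q'.V, (g₀ v).1.1 = f'.onV v)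
    (hE : ∀ e : Q'.E,
      (g₀ (Q'.t e)).1 = (Q.t (f'.onE e), (g₀ (Q'.s e)).1.2 ++ [f'.onE e])) :
    Hom Q' (PathQ T t) where
  onV := g₀
  onE e := ⟨((g₀ (Q'.s e)).1, f'.onE e), (g₀ (Q'.s e)).2, himgE e, by rw [f'.hs, hV]⟩
  hs _ := rfl
  ht e := Subtype.ext (hE e).symm

theorem homOfOnV_comp (himgE : ∀ e : Q'.E, f'.onE e ∈ T.edges) (g₀ : Q'.V → (PathQ T t).V)
    (hV : ∀ v : Q'.V, (g₀ v).1.1 = f'.onV v)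
    (hE : ∀ e : Q'.E,
      (g₀ (Q'.t e)).1 = (Q.t (f'.onE e), (g₀ (Q'.s e)).1.2 ++ [f'.onE e])) :
    (homOfOnV himgE g₀ hV hE).comp (pathPi T t) = f' := by
  ext v
  · exact hV v
  · rfl

end BQuiv.PathQ

theorem hom_to_pathQuiver_vertex_bijection_general
    (Q Q' : BQuiv) (f' : Hom Q' Q) (T : Sub Q) (t : Q.V)
    (himgE : ∀ e : Q'.E, f'.onE e ∈ T.edges) :
    Function.Injective
      (fun g : {g : Hom Q' (PathQ T t) // g.comp (pathPi T t) = f'} => g.1.onV) ∧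
    Set.range
      (fun g : {g : Hom Q' (PathQ T t) // g.comp (pathPi T t) = f'} => g.1.onV) =
      {g₀ : Q'.V → (PathQ T t).V |
        (∀ v : Q'.V, (g₀ v).1.1 = f'.onV v) ∧
        ∀ e : Q'.E,
          (g₀ (Q'.t e)).1 = (Q.t (f'.onE e), (g₀ (Q'.s e)).1.2 ++ [f'.onE e])} := by
  refine ⟨fun g g' h => Subtype.ext (PathQ.hom_ext_of_onV g.2 g'.2 h), ?_⟩
  ext g₀
  constructor
  · rintro ⟨g, rfl⟩
    exact ⟨PathQ.hom_onV_val_fst g.2, PathQ.hom_onV_target_val g.2⟩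
  · rintro ⟨hV, hE⟩
    exact ⟨⟨PathQ.homOfOnV himgE g₀ hV hE, PathQ.homOfOnV_comp himgE g₀ hV hE⟩, rfl⟩

/-- For a quiver `(Q', f')` over `Q` whose image lies in the subquiver
`T`, restriction to vertices is a bijection from the set of morphisms of quivers over `Q`
from `(Q', f')` to `(P_{T,t}, π)` onto the set of vertex functions `g₀` satisfying
(i) `π(g₀ v) = f' v` and (ii) `g₀(t(α')) = g₀(s(α'))·f'(α')`. -/
theorem hom_to_pathQuiver_vertex_bijection
    (Q Q' : BQuiv) (f' : Hom Q' Q) (T : Sub Q) (t : Q.V) (ht : t ∈ T.verts)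
    (himgV : ∀ v : Q'.V, f'.onV v ∈ T.verts)
    (himgE : ∀ e : Q'.E, f'.onE e ∈ T.edges) :
    Function.Injective
      (fun g : {g : Hom Q' (PathQ T t) // g.comp (pathPi T t) = f'} => g.1.onV) ∧
    Set.range
      (fun g : {g : Hom Q' (PathQ T t) // g.comp (pathPi T t) = f'} => g.1.onV) =
      {g₀ : Q'.V → (PathQ T t).V |
        (∀ v : Q'.V, (g₀ v).1.1 = f'.onV v) ∧
        ∀ e : Q'.E,
          (g₀ (Q'.t e)).1 = (Q.t (f'.onE e), (g₀ (Q'.s e)).1.2 ++ [f'.onE e])} :=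
  hom_to_pathQuiver_vertex_bijection_general Q Q' f' T t himgE
end

section
/- Let Q be a quiver, T a subquiver of Q, t a vertex of T, and (Q', f') a quiver over Q where Q' is finite and acyclic and has a unique source i' (i.e. i' is the only vertex of Q' with no incoming arrows). Then any two morphisms g, h of quivers over Q from (Q', f') to (P_{T,t}, π) with g(i') = h(i') are equal. -/
open BQuiv

/-!
An arrow of `P_{T,t}` is determined by its source and its image in `Q`. Hence two
morphisms over `Q` into `P_{T,t}` that agree at the source of an arrow agree on the arrow,
and so at its target. As `Q'` is finite and acyclic, "there is an arrow `u ⟶ v`" is a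
well-founded relation, and every vertex other than `i'` has an incoming arrow, so
well-founded induction spreads the agreement from `i'` to all of `Q'`.
-/

namespace BQuiv

def ArrowRel (X : BQuiv) (u v : X.V) : Prop :=
  ∃ e : X.E, X.s e = u ∧ X.t e = v

theorem exists_isPathFrom_of_transGen {X : BQuiv} {u v : X.V}
    (huv : Relation.TransGen X.ArrowRel u v) :
    ∃ es : List X.E, es ≠ [] ∧ X.IsPathFrom u v es := by
  induction huv with
  | single harrow =>
    obtain ⟨e, rfl, rfl⟩ := harrow
    exact ⟨[e], List.cons_ne_nil _ _, rfl, rfl⟩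
  | tail _ harrow ih =>
    obtain ⟨es, -, hpath⟩ := ih
    obtain ⟨e, hs, rfl⟩ := harrow
    exact ⟨es ++ [e], by simp, hpath.snoc hs⟩

theorem IsAcyclic.wellFounded_arrowRel {X : BQuiv} [Finite X.V] (hX : X.IsAcyclic) :
    WellFounded X.ArrowRel := by
  have : Std.Irrefl (Relation.TransGen X.ArrowRel) := ⟨fun v hv => by
    obtain ⟨es, hne, hpath⟩ := exists_isPathFrom_of_transGen hv
    exact hne (hX v es hpath)⟩
  exact Subrelation.wf Relation.TransGen.single
    (Finite.wellFounded_of_trans_of_irrefl (Relation.TransGen X.ArrowRel))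

def IsOutInjective {B Q : BQuiv} (p : Hom B Q) : Prop :=
  ∀ y z : B.E, B.s y = B.s z → p.onE y = p.onE z → y = z

theorem pathPi_isOutInjective {Q : BQuiv} (T : Sub Q) (t : Q.V) :
    IsOutInjective (pathPi T t) := fun _ _ hs hπ =>
  Subtype.ext (Prod.ext (congrArg Subtype.val hs) hπ)

theorem Hom.eq_of_comp_eq {A B Q : BQuiv} {p : Hom B Q} (hp : IsOutInjective p)
    (hwf : WellFounded A.ArrowRel) {i : A.V} (huniq : ∀ v : A.V, (∀ e : A.E, A.t e ≠ v) → v = i)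
    {g h : Hom A B} (hcomp : g.comp p = h.comp p) (hi : g.onV i = h.onV i) : g = h := by
  have onE_eq : ∀ e : A.E, g.onV (A.s e) = h.onV (A.s e) → g.onE e = h.onE e := fun e hs =>
    hp _ _ (by rw [g.hs, h.hs, hs]) (congrArg (fun k : Hom A Q => k.onE e) hcomp)
  have onV_eq : ∀ v : A.V, g.onV v = h.onV v := fun v => by
    induction v using hwf.induction with
    | _ v ih =>
      by_cases hvi : v = i
      · exact hvi ▸ hi
      · obtain ⟨e, rfl⟩ : ∃ e : A.E, A.t e = v := by
          by_contra! hnone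
          exact hvi (huniq v hnone)
        rw [← g.ht, ← h.ht, onE_eq e (ih _ ⟨e, rfl, rfl⟩)]
  exact Hom.ext (funext onV_eq) (funext fun e => onE_eq e (onV_eq _))

end BQuiv

theorem hom_to_pathQuiver_determined_by_source_general
    (Q Q' : BQuiv) [Fintype Q'.V] (hacyc : Q'.IsAcyclic)
    (f' : Hom Q' Q) (T : Sub Q) (t : Q.V)
    (i' : Q'.V)
    (huniq : ∀ v : Q'.V, (∀ e : Q'.E, Q'.t e ≠ v) → v = i')
    (g h : Hom Q' (PathQ T t))
    (hg : g.comp (pathPi T t) = f') (hh : h.comp (pathPi T t) = f')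
    (heq : g.onV i' = h.onV i') :
    g = h :=
  Hom.eq_of_comp_eq (pathPi_isOutInjective T t) hacyc.wellFounded_arrowRel huniq
    (hg.trans hh.symm) heq

/-- If `Q'` is finite and acyclic with a unique source `i'`, then a
morphism of quivers over `Q` from `(Q', f')` to `(P_{T,t}, π)` is determined by its value
at `i'`. -/
theorem hom_to_pathQuiver_determined_by_source
    (Q Q' : BQuiv) [Fintype Q'.V] [Fintype Q'.E] (hacyc : Q'.IsAcyclic)
    (f' : Hom Q' Q) (T : Sub Q) (t : Q.V) (ht : t ∈ T.verts)
    (i' : Q'.V)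
    (hsrc : ∀ e : Q'.E, Q'.t e ≠ i')
    (huniq : ∀ v : Q'.V, (∀ e : Q'.E, Q'.t e ≠ v) → v = i')
    (g h : Hom Q' (PathQ T t))
    (hg : g.comp (pathPi T t) = f') (hh : h.comp (pathPi T t) = f')
    (heq : g.onV i' = h.onV i') :
    g = h :=
  hom_to_pathQuiver_determined_by_source_general Q Q' hacyc f' T t i' huniq g h hg hh heq
end

section
/- Let Q be a finite acyclic quiver and S, T subquivers of Q such that S has a unique source s₀ and every vertex of S is the terminal vertex of a path in S starting at s₀, and T has a unique source t₀. Then the number of morphisms of quivers over Q from P_S = (P_{S,s₀}, π_S) to P_T = (P_{T,t₀}, π_T) equals the number of paths in T from t₀ to s₀ if S ⊆ T, and equals 0 otherwise. -/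
open BQuiv

/-! A morphism over `Q` from `P_S` to `P_T` must send the trivial path at `s₀` to some path
`q` in `T` from `t₀` to `s₀`, and, since it commutes with the structure maps, it must send
each arrow `p ⟶ p·α` to an arrow over `α`; induction along `p` then forces it to be
`p ↦ q·p`. Conversely, prepending any such `q` is a morphism over `Q` as soon as `S ⊆ T`.
When `S ⊄ T`, a vertex or arrow of `S` outside `T` is the endpoint (or last arrow) of a path
from `s₀`, whose image would be a path in `T` through it, so no morphism exists. -/

namespace BQuiv

theorem IsPathFrom.unsnoc {Q : BQuiv} {a b : Q.V} {e : Q.E} {es : List Q.E}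
    (h : Q.IsPathFrom a b (es ++ [e])) : Q.IsPathFrom a (Q.s e) es ∧ Q.t e = b := by
  induction es generalizing a with
  | nil => exact ⟨h.1.symm, h.2⟩
  | cons f fs ih => exact ⟨⟨h.1, (ih h.2).1⟩, (ih h.2).2⟩

namespace Sub.IsPathIn

variable {Q : BQuiv} {T : Sub Q} {a b : Q.V}

theorem end_mem {es : List Q.E} (h : T.IsPathIn a b es) : b ∈ T.verts := by
  induction es generalizing a with
  | nil => exact h.2.1 ▸ h.1
  | cons e es ih =>
      exact ih ⟨T.tgt_mem e (h.2.2 e List.mem_cons_self), h.2.1.2,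
        fun f hf => h.2.2 f (List.mem_cons_of_mem _ hf)⟩

theorem unsnoc {e : Q.E} {es : List Q.E} (h : T.IsPathIn a b (es ++ [e])) :
    T.IsPathIn a (Q.s e) es ∧ e ∈ T.edges ∧ Q.t e = b :=
  ⟨⟨h.1, h.2.1.unsnoc.1, fun f hf => h.2.2 f (List.mem_append_left _ hf)⟩,
    h.2.2 e (by simp), h.2.1.unsnoc.2⟩

theorem append {c : Q.V} {es fs : List Q.E} (h : T.IsPathIn a b es)
    (h' : Q.IsPathFrom b c fs) (hfs : ∀ e ∈ fs, e ∈ T.edges) :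
    T.IsPathIn a c (es ++ fs) :=
  ⟨h.1, h.2.1.append h', fun e he => (List.mem_append.1 he).elim (h.2.2 e) (hfs e)⟩

end Sub.IsPathIn

variable {Q : BQuiv} {S T : Sub Q} {s₀ t₀ : Q.V}

def PathQ.nil (hs₀ : s₀ ∈ S.verts) : (PathQ S s₀).V :=
  ⟨(s₀, []), hs₀, rfl, by simp⟩

def prependHom (hST : S.le T) (q : List Q.E) (hq : T.IsPathIn t₀ s₀ q) :
    Hom (PathQ S s₀) (PathQ T t₀) where
  onV p := ⟨(p.1.1, q ++ p.1.2), hq.append p.2.2.1 fun e he => hST.2 (p.2.2.2 e he)⟩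
  onE y := ⟨((y.1.1.1, q ++ y.1.1.2), y.1.2),
    hq.append y.2.1.2.1 (fun e he => hST.2 (y.2.1.2.2 e he)), hST.2 y.2.2.1, y.2.2.2⟩
  hs _ := rfl
  ht y := Subtype.ext (Prod.ext rfl (List.append_assoc q y.1.1.2 [y.1.2]))

namespace Hom

section Over

variable {A : BQuiv} {f : Hom A Q} {g g' : Hom A (PathQ T t₀)}

theorem onV_fst (hg : g.comp (pathPi T t₀) = f) (p : A.V) : (g.onV p).1.1 = f.onV p :=
  congrFun (congrArg Hom.onV hg) p

theorem onE_snd (hg : g.comp (pathPi T t₀) = f) (y : A.E) : (g.onE y).1.2 = f.onE y :=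
  congrFun (congrArg Hom.onE hg) y

/-- An arrow of `P_T` is determined by its source and its label in `Q`. -/
theorem ext_of_onV (hg : g.comp (pathPi T t₀) = f) (hg' : g'.comp (pathPi T t₀) = f)
    (hV : g.onV = g'.onV) : g = g' := by
  refine Hom.ext hV (funext fun y => Subtype.ext (Prod.ext ?_ ?_))
  · have hs := congrArg Subtype.val (g.hs y)
    have hs' := congrArg Subtype.val (g'.hs y)
    exact hs.trans ((congrArg Subtype.val (congrFun hV (A.s y))).trans hs'.symm)
  · rw [onE_snd hg, onE_snd hg']

end Over

variable {g : Hom (PathQ S s₀) (PathQ T t₀)}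

theorem onV_t_snd (hg : g.comp (pathPi T t₀) = pathPi S s₀) (y : (PathQ S s₀).E) :
    (g.onV ((PathQ S s₀).t y)).1.2 = (g.onV ((PathQ S s₀).s y)).1.2 ++ [y.1.2] := by
  rw [← g.ht y, ← g.hs y]
  exact congrArg (_ ++ [·]) (onE_snd hg y)

def basePath (g : Hom (PathQ S s₀) (PathQ T t₀)) (hs₀ : s₀ ∈ S.verts) : List Q.E :=
  (g.onV (PathQ.nil hs₀)).1.2

theorem basePath_isPathIn (hg : g.comp (pathPi T t₀) = pathPi S s₀) (hs₀ : s₀ ∈ S.verts) :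
    T.IsPathIn t₀ s₀ (g.basePath hs₀) := by
  have h := (g.onV (PathQ.nil hs₀)).2
  rwa [show (g.onV (PathQ.nil hs₀)).1.1 = s₀ from onV_fst hg _] at h

theorem onV_snd (hg : g.comp (pathPi T t₀) = pathPi S s₀) (hs₀ : s₀ ∈ S.verts)
    (p : (PathQ S s₀).V) : (g.onV p).1.2 = g.basePath hs₀ ++ p.1.2 := by
  obtain ⟨⟨v, es⟩, hp⟩ := p
  induction es using List.reverseRecOn generalizing v with
  | nil =>
      obtain rfl : s₀ = v := hp.2.1
      exact (List.append_nil _).symm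
  | append_singleton es α ih =>
      obtain ⟨hes, hα, rfl⟩ := hp.unsnoc
      let y : (PathQ S s₀).E := ⟨((Q.s α, es), α), hes, hα, rfl⟩
      calc (g.onV ((PathQ S s₀).t y)).1.2
          = (g.onV ((PathQ S s₀).s y)).1.2 ++ [α] := onV_t_snd hg y
        _ = g.basePath hs₀ ++ es ++ [α] := congrArg (· ++ [α]) (ih _ hes)
        _ = g.basePath hs₀ ++ (es ++ [α]) := List.append_assoc _ _ _

theorem eq_prependHom (hg : g.comp (pathPi T t₀) = pathPi S s₀) (hs₀ : s₀ ∈ S.verts)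
    (hST : S.le T) : g = prependHom hST (g.basePath hs₀) (basePath_isPathIn hg hs₀) :=
  ext_of_onV hg rfl <| funext fun p =>
    Subtype.ext (Prod.ext (onV_fst hg p) (onV_snd hg hs₀ p))

end Hom

theorem Sub.le_of_hom_over (hreach : ∀ v ∈ S.verts, ∃ es, S.IsPathIn s₀ v es)
    (g : Hom (PathQ S s₀) (PathQ T t₀)) (hg : g.comp (pathPi T t₀) = pathPi S s₀) :
    S.le T := by
  constructor
  · intro v hv
    obtain ⟨es, hes⟩ := hreach v hv
    have h := (g.onV ⟨(v, es), hes⟩).2.end_mem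
    rwa [show (g.onV ⟨(v, es), hes⟩).1.1 = v from Hom.onV_fst hg _] at h
  · intro e he
    obtain ⟨es, hes⟩ := hreach _ (S.src_mem e he)
    let y : (PathQ S s₀).E := ⟨((Q.s e, es), e), hes, he, rfl⟩
    have h := (g.onE y).2.2.1
    rwa [show (g.onE y).1.2 = e from Hom.onE_snd hg y] at h

def prependEquiv (hST : S.le T) (hs₀ : s₀ ∈ S.verts) :
    {q : List Q.E // T.IsPathIn t₀ s₀ q} ≃
      {g : Hom (PathQ S s₀) (PathQ T t₀) // g.comp (pathPi T t₀) = pathPi S s₀} where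
  toFun q := ⟨prependHom hST q.1 q.2, rfl⟩
  invFun g := ⟨g.1.basePath hs₀, Hom.basePath_isPathIn g.2 hs₀⟩
  left_inv q := Subtype.ext (List.append_nil q.1)
  right_inv g := Subtype.ext (Hom.eq_prependHom g.2 hs₀ hST).symm

end BQuiv

theorem card_hom_pathQuiver_to_pathQuiver_general
    (Q : BQuiv)
    (S T : Sub Q) (s₀ t₀ : Q.V)
    (hS : S.IsUniqueSource s₀)
    (hreach : ∀ v ∈ S.verts, ∃ es, S.IsPathIn s₀ v es) :
    (S.le T →
      Nat.card {g : Hom (PathQ S s₀) (PathQ T t₀) // g.comp (pathPi T t₀) = pathPi S s₀} =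
        Nat.card {es : List Q.E // T.IsPathIn t₀ s₀ es}) ∧
    (¬ S.le T →
      Nat.card {g : Hom (PathQ S s₀) (PathQ T t₀) // g.comp (pathPi T t₀) = pathPi S s₀} =
        0) := by
  refine ⟨fun hST => (Nat.card_congr (prependEquiv hST hS.1)).symm, fun hnST => ?_⟩
  have : IsEmpty
      {g : Hom (PathQ S s₀) (PathQ T t₀) // g.comp (pathPi T t₀) = pathPi S s₀} :=
    ⟨fun g => hnST (Sub.le_of_hom_over hreach g.1 g.2)⟩
  exact Nat.card_of_isEmpty

/-- For subquivers `S, T` of a finite acyclic quiver `Q`, where `S` has a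
unique source `s₀` reaching every vertex of `S` and `T` has a unique source `t₀`, the
number of morphisms of quivers over `Q` from `P_S` to `P_T` is the number of paths in `T`
from `t₀` to `s₀` if `S ⊆ T`, and `0` otherwise. -/
theorem card_hom_pathQuiver_to_pathQuiver
    (Q : BQuiv) [Fintype Q.V] [Fintype Q.E] (hQ : Q.IsAcyclic)
    (S T : Sub Q) (s₀ t₀ : Q.V)
    (hS : S.IsUniqueSource s₀)
    (hreach : ∀ v ∈ S.verts, ∃ es, S.IsPathIn s₀ v es)
    (hT : T.IsUniqueSource t₀) :
    (S.le T →
      Nat.card {g : Hom (PathQ S s₀) (PathQ T t₀) // g.comp (pathPi T t₀) = pathPi S s₀} =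
        Nat.card {es : List Q.E // T.IsPathIn t₀ s₀ es}) ∧
    (¬ S.le T →
      Nat.card {g : Hom (PathQ S s₀) (PathQ T t₀) // g.comp (pathPi T t₀) = pathPi S s₀} =
        0) :=
  card_hom_pathQuiver_to_pathQuiver_general Q S T s₀ t₀ hS hreach
end

section
/- Let Q be a finite acyclic quiver and S, T subquivers of Q such that S has a unique sink u₀ and every vertex of S is the starting vertex of a path in S ending at u₀, and T has a unique sink v₀. Then the number of morphisms of quivers over Q from I_S = (I_{S,u₀}, π_S) to I_T = (I_{T,v₀}, π_T) equals the number of paths in T from u₀ to v₀ if S ⊆ T, and equals 0 otherwise. -/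
open BQuiv

/-! A morphism over `Q` between copath quivers preserves starting vertices and arrow labels.
Since every path `α·q` of `I_S` is the source of the arrow `(α, q)`, induction on the path shows
that such a morphism sends `q` to `q·p`, where `p` is the image of the trivial path at `u₀`;
conversely appending any path `p` from `u₀` to `v₀` in `T` is a morphism over `Q` once `S ⊆ T`.
A morphism also sends every vertex and arrow of `S` (all lie on paths to `u₀`) into `T`. -/

namespace BQuiv

def HomOver {A B Q : BQuiv} (f : Hom A Q) (g : Hom B Q) : Type :=
  {h : Hom A B // h.comp g = f}

namespace HomOver

variable {A B Q : BQuiv} {f : Hom A Q} {g : Hom B Q}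

theorem onV_comm (h : HomOver f g) (x : A.V) : g.onV (h.1.onV x) = f.onV x :=
  congrFun (congrArg Hom.onV h.2) x

theorem onE_comm (h : HomOver f g) (e : A.E) : g.onE (h.1.onE e) = f.onE e :=
  congrFun (congrArg Hom.onE h.2) e

end HomOver

namespace Sub.IsPathIn

variable {Q : BQuiv} {S T : Sub Q} {a b c : Q.V} {α : Q.E} {es p : List Q.E}

theorem head_mem (h : S.IsPathIn a b (α :: es)) : α ∈ S.edges :=
  h.2.2 α List.mem_cons_self

theorem tail (h : S.IsPathIn a b (α :: es)) : S.IsPathIn (Q.t α) b es :=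
  ⟨S.tgt_mem α h.head_mem, h.2.1.2, fun e he => h.2.2 e (List.mem_cons_of_mem _ he)⟩

theorem append_of_le (hle : S.le T) (h : S.IsPathIn a b es) (hp : T.IsPathIn b c p) :
    T.IsPathIn a c (es ++ p) :=
  ⟨hle.1 h.1, h.2.1.append hp.2.1,
    fun e he => (List.mem_append.1 he).elim (fun h' => hle.2 (h.2.2 e h')) (hp.2.2 e)⟩

end Sub.IsPathIn

namespace CoPathQ

variable {Q : BQuiv} {S T : Sub Q} {u₀ v₀ : Q.V}

def nil (hu : u₀ ∈ S.verts) : (CoPathQ S u₀).V :=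
  ⟨(u₀, []), hu, rfl, by simp⟩

def appendHom (hle : S.le T) (p : List Q.E) (hp : T.IsPathIn u₀ v₀ p) :
    HomOver (coPathPi S u₀) (coPathPi T v₀) where
  val :=
    { onV := fun x => ⟨(x.1.1, x.1.2 ++ p), x.2.append_of_le hle hp⟩
      onE := fun y => ⟨(y.1.1, (y.1.2.1, y.1.2.2 ++ p)), y.2.1.append_of_le hle hp,
        hle.2 y.2.2.1, y.2.2.2⟩
      hs := fun _ => rfl
      ht := fun _ => rfl }
  property := rfl

section

variable (g : HomOver (coPathPi S u₀) (coPathPi T v₀))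

theorem start_onV (x : (CoPathQ S u₀).V) : (g.1.onV x).1.1 = x.1.1 :=
  g.onV_comm x

theorem label_onE (y : (CoPathQ S u₀).E) : (g.1.onE y).1.1 = y.1.1 :=
  g.onE_comm y

theorem onV_source (y : (CoPathQ S u₀).E) :
    (g.1.onV ((CoPathQ S u₀).s y)).1.2 = y.1.1 :: (g.1.onV ((CoPathQ S u₀).t y)).1.2 := by
  rw [← g.1.hs y, ← g.1.ht y]
  exact congrArg (· :: _) (label_onE g y)

theorem onV_eq_append (hu : u₀ ∈ S.verts) (x : (CoPathQ S u₀).V) :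
    (g.1.onV x).1 = (x.1.1, x.1.2 ++ (g.1.onV (nil hu)).1.2) := by
  obtain ⟨⟨a, es⟩, hx⟩ := x
  refine Prod.ext (start_onV g _) ?_
  induction es generalizing a with
  | nil =>
    obtain rfl : a = u₀ := hx.2.1
    rfl
  | cons α es ih =>
    let y : (CoPathQ S u₀).E := ⟨(α, (Q.t α, es)), hx.tail, hx.head_mem, rfl⟩
    obtain rfl : Q.s α = a := hx.2.1.1
    exact (onV_source g y).trans (congrArg (α :: ·) (ih _ hx.tail))

theorem isPathIn_onV_nil (hu : u₀ ∈ S.verts) : T.IsPathIn u₀ v₀ (g.1.onV (nil hu)).1.2 := by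
  have h := (g.1.onV (nil hu)).2
  rwa [start_onV] at h

theorem eq_appendHom (hu : u₀ ∈ S.verts) (hle : S.le T) :
    g = appendHom hle _ (isPathIn_onV_nil g hu) := by
  refine Subtype.ext (Hom.ext (funext fun x => Subtype.ext (onV_eq_append g hu x))
    (funext fun y => Subtype.ext (Prod.ext (label_onE g y) ?_)))
  exact (congrArg Subtype.val (g.1.ht y)).trans (onV_eq_append g hu _)

end

theorem start_mem_verts (g : HomOver (coPathPi S u₀) (coPathPi T v₀))
    (x : (CoPathQ S u₀).V) : x.1.1 ∈ T.verts := by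
  have h := (g.1.onV x).2.1
  rwa [start_onV] at h

theorem label_mem_edges (g : HomOver (coPathPi S u₀) (coPathPi T v₀))
    (y : (CoPathQ S u₀).E) : y.1.1 ∈ T.edges := by
  have h := (g.1.onE y).2.2.1
  rwa [label_onE] at h

end CoPathQ

theorem Sub.le_of_homOver_coPathPi {Q : BQuiv} {S T : Sub Q} {u₀ v₀ : Q.V}
    (hreach : ∀ v ∈ S.verts, ∃ es, S.IsPathIn v u₀ es)
    (g : HomOver (coPathPi S u₀) (coPathPi T v₀)) : S.le T := by
  refine ⟨fun v hv => ?_, fun e he => ?_⟩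
  · obtain ⟨es, hes⟩ := hreach v hv
    exact CoPathQ.start_mem_verts g ⟨(v, es), hes⟩
  · obtain ⟨es, hes⟩ := hreach (Q.t e) (S.tgt_mem e he)
    exact CoPathQ.label_mem_edges g ⟨(e, (Q.t e, es)), hes, he, rfl⟩

def homOverCoPathEquivPaths {Q : BQuiv} {S T : Sub Q} {u₀ v₀ : Q.V}
    (hu : u₀ ∈ S.verts) (hle : S.le T) :
    HomOver (coPathPi S u₀) (coPathPi T v₀) ≃ {p : List Q.E // T.IsPathIn u₀ v₀ p} where
  toFun g := ⟨_, CoPathQ.isPathIn_onV_nil g hu⟩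
  invFun p := CoPathQ.appendHom hle p.1 p.2
  left_inv g := (CoPathQ.eq_appendHom g hu hle).symm
  right_inv _ := rfl

end BQuiv

theorem card_hom_copathQuiver_to_copathQuiver_general
    (Q : BQuiv)
    (S T : Sub Q) (u₀ v₀ : Q.V)
    (hS : S.IsUniqueSink u₀)
    (hreach : ∀ v ∈ S.verts, ∃ es, S.IsPathIn v u₀ es) :
    (S.le T →
      Nat.card {g : Hom (CoPathQ S u₀) (CoPathQ T v₀) //
          g.comp (coPathPi T v₀) = coPathPi S u₀} =
        Nat.card {es : List Q.E // T.IsPathIn u₀ v₀ es}) ∧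
    (¬ S.le T →
      Nat.card {g : Hom (CoPathQ S u₀) (CoPathQ T v₀) //
          g.comp (coPathPi T v₀) = coPathPi S u₀} =
        0) := by
  refine ⟨fun hle => Nat.card_congr (homOverCoPathEquivPaths hS.1 hle), fun hnle => ?_⟩
  exact Nat.card_eq_zero.2 (Or.inl ⟨fun g => hnle (Sub.le_of_homOver_coPathPi hreach g)⟩)

/-- For subquivers `S, T` of a finite acyclic quiver `Q`, where `S` has a
unique sink `u₀` reached from every vertex of `S` and `T` has a unique sink `v₀`, the
number of morphisms of quivers over `Q` from `I_S` to `I_T` is the number of paths in `T`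
from `u₀` to `v₀` if `S ⊆ T`, and `0` otherwise. -/
theorem card_hom_copathQuiver_to_copathQuiver
    (Q : BQuiv) [Fintype Q.V] [Fintype Q.E] (hQ : Q.IsAcyclic)
    (S T : Sub Q) (u₀ v₀ : Q.V)
    (hS : S.IsUniqueSink u₀)
    (hreach : ∀ v ∈ S.verts, ∃ es, S.IsPathIn v u₀ es)
    (hT : T.IsUniqueSink v₀) :
    (S.le T →
      Nat.card {g : Hom (CoPathQ S u₀) (CoPathQ T v₀) //
          g.comp (coPathPi T v₀) = coPathPi S u₀} =
        Nat.card {es : List Q.E // T.IsPathIn u₀ v₀ es}) ∧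
    (¬ S.le T →
      Nat.card {g : Hom (CoPathQ S u₀) (CoPathQ T v₀) //
          g.comp (coPathPi T v₀) = coPathPi S u₀} =
        0) :=
  card_hom_copathQuiver_to_copathQuiver_general Q S T u₀ v₀ hS hreach
end

section
/- Let Q be a finite acyclic quiver, S a subquiver with a unique source s₀, and T a subquiver with a unique sink u₀. Then every connected component of the fiber product P_{S,s₀} ×_Q I_{T,u₀}, regarded as a quiver over Q via the restricted structure map, is isomorphic over Q to a linear quiver tracing a path of Q: there exist n ≥ 0 and composable arrows α₁, …, α_n of Q such that the component is isomorphic over Q to the quiver with vertices 0, 1, …, n and one arrow k−1 ⟶ k for each 1 ≤ k ≤ n, whose structure map sends the arrow k−1 ⟶ k to α_k. -/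
open BQuiv

/-! A vertex of `P_{S,s₀} ×_Q I_{T,u₀}` is an `S`-path `p` from `s₀` and a `T`-path `q` to `u₀`
meeting at a common vertex, i.e. a path `L = p ++ q` from `s₀` to `u₀` together with a split
point `k = |p|`. An arrow `(p, α·q) ⟶ (p·α, q)` keeps `L` and moves the split point one step to
the right, and it is determined by its source. Hence the component of `(L, k₀)` consists of the
pairs `(L, k)` with `k` in the maximal interval `[m, M]` of split points of `L` containing `k₀`,
and `(L, k) ↦ k - m` identifies it with the linear quiver tracing `L[m:M]`. -/

open Set

theorem Nat.mem_ordConnectedComponent_of_adjacent {s : Set ℕ} {k x y : ℕ}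
    (hx : x ∈ ordConnectedComponent s k) (hy : y ∈ s) (hxy : y = x + 1 ∨ x = y + 1) :
    y ∈ ordConnectedComponent s k := by
  refine mem_ordConnectedComponent_trans hx fun z hz => ?_
  obtain rfl | rfl : z = x ∨ z = y := by rw [mem_uIcc] at hz; omega
  exacts [ordConnectedComponent_subset hx, hy]

theorem List.getElem_extract_sub {α : Type*} (l : List α) {m M i : ℕ} (hm : m ≤ i)
    (h : i - m < (l.extract m M).length) :
    (l.extract m M)[i - m] = l[i]'(by simp at h; omega) := by
  simp [Nat.add_sub_cancel' hm]

namespace BQuiv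

variable {Q : BQuiv}

theorem IsPathFrom.vertAt_length {a b : Q.V} {es : List Q.E} (h : Q.IsPathFrom a b es) :
    vertAt Q a es es.length = b := by
  induction es generalizing a with
  | nil => exact h
  | cons e es ih => exact ih h.2

theorem vertAt_append_of_le (a : Q.V) {p : List Q.E} (q : List Q.E) {j : ℕ}
    (hj : j ≤ p.length) : vertAt Q a (p ++ q) j = vertAt Q a p j := by
  induction p generalizing a j with
  | nil => rw [Nat.le_zero.mp hj]; cases q <;> rfl
  | cons e es ih =>
      cases j with
      | zero => rfl
      | succ j => exact ih _ (Nat.succ_le_succ_iff.mp hj)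

theorem vertAt_take_of_le (a : Q.V) (l : List Q.E) {j k : ℕ} (hj : j ≤ k) :
    vertAt Q a (l.take k) j = vertAt Q a l j := by
  induction l generalizing a j k with
  | nil => simp
  | cons e es ih =>
      cases k with
      | zero => rw [Nat.le_zero.mp hj]; rfl
      | succ k =>
          cases j with
          | zero => rfl
          | succ j => exact ih _ (Nat.succ_le_succ_iff.mp hj)

theorem vertAt_add (a : Q.V) (l : List Q.E) (m i : ℕ) :
    vertAt Q a l (m + i) = vertAt Q (vertAt Q a l m) (l.drop m) i := by
  induction l generalizing a m with
  | nil => cases m <;> cases i <;> rfl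
  | cons e es ih =>
      cases m with
      | zero => rw [Nat.zero_add]; rfl
      | succ m => rw [Nat.succ_add]; exact ih _ m

theorem IsPathFrom.take {a b : Q.V} {l : List Q.E} (h : Q.IsPathFrom a b l) (k : ℕ) :
    Q.IsPathFrom a (vertAt Q a l k) (l.take k) := by
  induction l generalizing a k with
  | nil => cases k <;> exact rfl
  | cons e es ih =>
      cases k with
      | zero => rfl
      | succ k => exact ⟨h.1, ih h.2 k⟩

theorem IsPathFrom.drop {a b : Q.V} {l : List Q.E} (h : Q.IsPathFrom a b l) (k : ℕ) :
    Q.IsPathFrom (vertAt Q a l k) b (l.drop k) := by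
  induction l generalizing a k with
  | nil => cases k <;> exact h
  | cons e es ih =>
      cases k with
      | zero => exact h
      | succ k => exact ih h.2 k

theorem IsPathFrom.extract {a b : Q.V} {l : List Q.E} (h : Q.IsPathFrom a b l) {m M : ℕ}
    (hmM : m ≤ M) : Q.IsPathFrom (vertAt Q a l m) (vertAt Q a l M) (l.extract m M) := by
  have hM : vertAt Q a l M = vertAt Q (vertAt Q a l m) (l.drop m) (M - m) := by
    rw [← vertAt_add, Nat.add_sub_cancel' hmM]
  rw [hM, List.extract_eq_take_drop]
  exact (h.drop m).take (M - m)

theorem vertAt_extract (a : Q.V) (l : List Q.E) {m M i : ℕ} (hm : m ≤ i) (hM : i ≤ M) :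
    vertAt Q (vertAt Q a l m) (l.extract m M) (i - m) = vertAt Q a l i := by
  rw [List.extract_eq_take_drop, vertAt_take_of_le _ _ (by omega), ← vertAt_add,
    Nat.add_sub_cancel' hm]

theorem conn_symm {X : BQuiv} {v w : X.V} (h : Conn X v w) : Conn X w v :=
  Relation.ReflTransGen.mono (fun _ _ ⟨e, he⟩ => ⟨e, he.symm⟩) _ _
    (Relation.ReflTransGen.swap _ _ h)

theorem nonempty_overIso_traceHom {X : BQuiv} (f : Hom X Q) {a b : Q.V} {es : List Q.E}
    (hes : Q.IsPathFrom a b es) (ht : X.V → ℕ) (ht_le : ∀ v, ht v ≤ es.length)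
    (ht_inj : Function.Injective ht) (ht_surj : ∀ k ≤ es.length, ∃ v, ht v = k)
    (ht_t : ∀ e, ht (X.t e) = ht (X.s e) + 1)
    (s_inj : Function.Injective X.s) (s_surj : ∀ k < es.length, ∃ e, ht (X.s e) = k)
    (onV_eq : ∀ v, f.onV v = vertAt Q a es (ht v))
    (onE_eq : ∀ e (he : ht (X.s e) < es.length), f.onE e = es[ht (X.s e)]) :
    Nonempty (OverIso f (traceHom Q a b es hes)) := by
  have hs_lt : ∀ e, ht (X.s e) < es.length := fun e => by
    have := ht_le (X.t e)
    rw [ht_t] at this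
    omega
  refine ⟨⟨⟨fun v => ⟨ht v, Nat.lt_succ_of_le (ht_le v)⟩, fun e => ⟨ht (X.s e), hs_lt e⟩,
    fun e => rfl, fun e => Fin.ext (ht_t e).symm⟩, ?_, ⟨?_, ?_⟩, ⟨?_, ?_⟩⟩⟩
  · exact Hom.ext (funext fun v => (onV_eq v).symm) (funext fun e => (onE_eq e (hs_lt e)).symm)
  · exact fun v w h => ht_inj (Fin.ext_iff.1 h)
  · intro k
    obtain ⟨v, hv⟩ := ht_surj k.1 (Nat.lt_succ_iff.1 k.2)
    exact ⟨v, Fin.ext hv⟩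
  · exact fun e e' h => s_inj (ht_inj (Fin.ext_iff.1 h))
  · intro k
    obtain ⟨e, he⟩ := s_surj k.1 k.2
    exact ⟨e, Fin.ext he⟩

/-- The bound on `k` matters: `vertAt`, `take` and `drop` are constant past the end of `L`. -/
def IsSplitPoint (S T : Sub Q) (s₀ u₀ : Q.V) (L : List Q.E) (k : ℕ) : Prop :=
  k ≤ L.length ∧ S.IsPathIn s₀ (vertAt Q s₀ L k) (L.take k) ∧
    T.IsPathIn (vertAt Q s₀ L k) u₀ (L.drop k)

variable {S T : Sub Q} {s₀ u₀ : Q.V}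

theorem IsSplitPoint.isPathFrom {L : List Q.E} {k : ℕ} (h : IsSplitPoint S T s₀ u₀ L k) :
    Q.IsPathFrom s₀ u₀ L := by
  simpa using h.2.1.2.1.append h.2.2.2.1

local notation "𝓕" => Fib (pathPi S s₀) (coPathPi T u₀)

namespace PathCopathFib

def path (w : (𝓕).V) : List Q.E :=
  w.1.1.1.2 ++ w.1.2.1.2

def split (w : (𝓕).V) : ℕ :=
  w.1.1.1.2.length

def mk (L : List Q.E) (k : ℕ) (h : IsSplitPoint S T s₀ u₀ L k) : (𝓕).V :=
  ⟨(⟨(vertAt Q s₀ L k, L.take k), h.2.1⟩, ⟨(vertAt Q s₀ L k, L.drop k), h.2.2⟩), rfl⟩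

@[simp]
theorem path_mk {L : List Q.E} {k : ℕ} (h : IsSplitPoint S T s₀ u₀ L k) :
    path (mk L k h) = L :=
  L.take_append_drop k

@[simp]
theorem split_mk {L : List Q.E} {k : ℕ} (h : IsSplitPoint S T s₀ u₀ L k) :
    split (mk L k h) = k := by
  simpa [split, mk] using h.1

theorem vertAt_path_split (w : (𝓕).V) : vertAt Q s₀ (path w) (split w) = w.1.1.1.1 := by
  rw [path, split, vertAt_append_of_le _ _ le_rfl]
  exact w.1.1.2.2.1.vertAt_length

theorem fibHom_onV (w : (𝓕).V) :
    (fibHom (pathPi S s₀) (coPathPi T u₀)).onV w = vertAt Q s₀ (path w) (split w) :=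
  (vertAt_path_split w).symm

theorem isSplitPoint_split (w : (𝓕).V) : IsSplitPoint S T s₀ u₀ (path w) (split w) := by
  refine ⟨by simp [path, split], ?_, ?_⟩ <;> rw [vertAt_path_split] <;>
    simp only [path, split, List.take_left, List.drop_left]
  · exact w.1.1.2
  · rw [show w.1.1.1.1 = w.1.2.1.1 from w.2]
    exact w.1.2.2

theorem isPathFrom_path (w : (𝓕).V) : Q.IsPathFrom s₀ u₀ (path w) :=
  (isSplitPoint_split w).isPathFrom

theorem mk_path_split (w : (𝓕).V) : mk (path w) (split w) (isSplitPoint_split w) = w := by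
  have hv := vertAt_path_split w
  exact Subtype.ext <| Prod.ext (Subtype.ext <| Prod.ext hv List.take_left)
    (Subtype.ext <| Prod.ext (hv.trans w.2) List.drop_left)

theorem eq_mk {w : (𝓕).V} {L : List Q.E} {k : ℕ} (hL : path w = L) (hk : split w = k)
    (h : IsSplitPoint S T s₀ u₀ L k) : w = mk L k h := by
  subst hL hk
  exact (mk_path_split w).symm

theorem eq_of_path_eq_of_split_eq {w w' : (𝓕).V} (hL : path w = path w')
    (hk : split w = split w') : w = w' := by
  rw [eq_mk hL hk (isSplitPoint_split w'), mk_path_split]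

def mkEdge {L : List Q.E} {k : ℕ} (h₁ : IsSplitPoint S T s₀ u₀ L k)
    (h₂ : IsSplitPoint S T s₀ u₀ L (k + 1)) : (𝓕).E :=
  have hk : k < L.length := h₂.1
  ⟨(⟨((vertAt Q s₀ L k, L.take k), L[k]), h₁.2.1,
      h₂.2.1.2.2 _ (by
        rw [List.take_succ_eq_append_getElem hk]
        exact List.mem_append_right _ (List.mem_singleton_self _)),
      vertAt_s h₁.isPathFrom ⟨k, hk⟩⟩,
    ⟨(L[k], (vertAt Q s₀ L (k + 1), L.drop (k + 1))), h₂.2.2,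
      h₁.2.2.2.2 _ (by rw [List.drop_eq_getElem_cons hk]; exact List.mem_cons_self),
      vertAt_t h₁.isPathFrom ⟨k, hk⟩⟩), rfl⟩

theorem s_mkEdge {L : List Q.E} {k : ℕ} (h₁ : IsSplitPoint S T s₀ u₀ L k)
    (h₂ : IsSplitPoint S T s₀ u₀ L (k + 1)) : (𝓕).s (mkEdge h₁ h₂) = mk L k h₁ :=
  Subtype.ext <| Prod.ext rfl <| Subtype.ext <|
    Prod.ext (vertAt_s h₁.isPathFrom ⟨k, h₂.1⟩) (List.drop_eq_getElem_cons h₂.1).symm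

theorem t_mkEdge {L : List Q.E} {k : ℕ} (h₁ : IsSplitPoint S T s₀ u₀ L k)
    (h₂ : IsSplitPoint S T s₀ u₀ L (k + 1)) : (𝓕).t (mkEdge h₁ h₂) = mk L (k + 1) h₂ :=
  Subtype.ext <| Prod.ext (Subtype.ext <| Prod.ext (vertAt_t h₁.isPathFrom ⟨k, h₂.1⟩)
    (List.take_succ_eq_append_getElem h₂.1).symm) rfl

theorem path_t (e : (𝓕).E) : path ((𝓕).t e) = path ((𝓕).s e) := by
  obtain ⟨⟨⟨⟨⟨v, p⟩, α⟩, hα⟩, ⟨⟨β, v', q⟩, hβ⟩⟩, hαβ : α = β⟩ := e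
  subst hαβ
  show (p ++ [α]) ++ q = p ++ α :: q
  simp

theorem split_t (e : (𝓕).E) : split ((𝓕).t e) = split ((𝓕).s e) + 1 :=
  List.length_append ..

theorem split_s_lt_length (e : (𝓕).E) : split ((𝓕).s e) < (path ((𝓕).s e)).length := by
  show e.1.1.1.1.2.length < (e.1.1.1.1.2 ++ e.1.2.1.1 :: e.1.2.1.2.2).length
  simp

theorem fibHom_onE (e : (𝓕).E) :
    (fibHom (pathPi S s₀) (coPathPi T u₀)).onE e =
      (path ((𝓕).s e))[split ((𝓕).s e)]'(split_s_lt_length e) := by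
  obtain ⟨⟨⟨⟨⟨v, p⟩, α⟩, hα⟩, ⟨⟨β, v', q⟩, hβ⟩⟩, hαβ : α = β⟩ := e
  subst hαβ
  show α = (p ++ α :: q)[p.length]'(by simp)
  rw [List.getElem_append_right le_rfl]
  simp

theorem eq_of_s_eq {e e' : (𝓕).E} (h : (𝓕).s e = (𝓕).s e') : e = e' := by
  obtain ⟨⟨⟨⟨⟨v, p⟩, α⟩, hα⟩, ⟨⟨β, v', q⟩, hβ⟩⟩, hαβ : α = β⟩ := e
  obtain ⟨⟨⟨⟨⟨w, p'⟩, α'⟩, hα'⟩, ⟨⟨β', w', q'⟩, hβ'⟩⟩, hαβ' : α' = β'⟩ := e'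
  subst hαβ hαβ'
  obtain ⟨rfl, rfl⟩ := Prod.mk.inj (congrArg (fun x => x.1.1.1) h : (v, p) = (w, p'))
  obtain ⟨rfl, rfl⟩ := List.cons.inj (congrArg (fun x => x.1.2.1.2) h : α :: q = α' :: q')
  obtain rfl : v' = w' := hβ.2.2.symm.trans hβ'.2.2
  rfl

theorem path_eq_of_adj {w w' : (𝓕).V} (h : Adj (𝓕) w w') : path w' = path w := by
  obtain ⟨e, ⟨rfl, rfl⟩ | ⟨rfl, rfl⟩⟩ := h
  exacts [path_t e, (path_t e).symm]

theorem split_eq_succ_or_of_adj {w w' : (𝓕).V} (h : Adj (𝓕) w w') :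
    split w' = split w + 1 ∨ split w = split w' + 1 := by
  obtain ⟨e, ⟨rfl, rfl⟩ | ⟨rfl, rfl⟩⟩ := h
  exacts [Or.inl (split_t e), Or.inr (split_t e)]

theorem conn_mk_mk {L : List Q.E} {i j : ℕ} (hij : i ≤ j)
    (h : Icc i j ⊆ {k | IsSplitPoint S T s₀ u₀ L k}) :
    Conn (𝓕) (mk L i (h ⟨le_rfl, hij⟩)) (mk L j (h ⟨hij, le_rfl⟩)) := by
  induction j, hij using Nat.le_induction with
  | base => exact .refl
  | succ j hij ih =>
      have h' : Icc i j ⊆ {k | IsSplitPoint S T s₀ u₀ L k} :=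
        (Icc_subset_Icc_right j.le_succ).trans h
      exact (ih h').tail ⟨mkEdge (h' ⟨hij, le_rfl⟩) (h ⟨hij.trans j.le_succ, le_rfl⟩),
        Or.inl ⟨s_mkEdge _ _, t_mkEdge _ _⟩⟩

def splitRun (v : (𝓕).V) : Set ℕ :=
  ordConnectedComponent {k | IsSplitPoint S T s₀ u₀ (path v) k} (split v)

theorem conn_iff {v w : (𝓕).V} : Conn (𝓕) v w ↔ path w = path v ∧ split w ∈ splitRun v := by
  constructor
  · intro h
    induction h with
    | refl => exact ⟨rfl, self_mem_ordConnectedComponent.2 (isSplitPoint_split v)⟩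
    | tail _ hadj ih =>
        have hp := (path_eq_of_adj hadj).trans ih.1
        exact ⟨hp, Nat.mem_ordConnectedComponent_of_adjacent ih.2 (hp ▸ isSplitPoint_split _)
          (split_eq_succ_or_of_adj hadj)⟩
  · rintro ⟨hp, hk⟩
    have hsub := mem_ordConnectedComponent.1 hk
    have hv := eq_mk rfl rfl (isSplitPoint_split v)
    have hw := eq_mk hp rfl (hsub right_mem_uIcc)
    rcases le_total (split v) (split w) with hle | hle
    · have h := conn_mk_mk hle (Icc_subset_uIcc.trans hsub)
      rwa [← hv, ← hw] at h
    · have h := conn_mk_mk hle (Icc_subset_uIcc'.trans hsub)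
      rw [← hv, ← hw] at h
      exact conn_symm h

theorem splitRun_eq_Icc (v : (𝓕).V) :
    splitRun v = Icc (sInf (splitRun v)) (sSup (splitRun v)) :=
  (Set.Nonempty.ordConnected_iff_of_bdd (I := splitRun v)
    ⟨_, self_mem_ordConnectedComponent.2 (isSplitPoint_split v)⟩ (OrderBot.bddBelow _)
    ⟨(path v).length, fun _ hk => (ordConnectedComponent_subset hk).1⟩).1
    (inferInstanceAs (ordConnectedComponent _ _).OrdConnected)

theorem isSplitPoint_of_splitRun_eq_Icc {v₀ : (𝓕).V} {m M : ℕ}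
    (hrun : splitRun v₀ = Icc m M) :
    Icc m M ⊆ {k | IsSplitPoint S T s₀ u₀ (path v₀) k} :=
  hrun ▸ ordConnectedComponent_subset

theorem le_of_splitRun_eq_Icc {v₀ : (𝓕).V} {m M : ℕ}
    (hrun : splitRun v₀ = Icc m M) : m ≤ M := by
  have h : split v₀ ∈ Icc m M := hrun ▸ self_mem_ordConnectedComponent.2 (isSplitPoint_split v₀)
  exact h.1.trans h.2

theorem length_extract_of_splitRun_eq_Icc {v₀ : (𝓕).V} {m M : ℕ}
    (hrun : splitRun v₀ = Icc m M) :
    ((path v₀).extract m M).length = M - m := by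
  have hM := (isSplitPoint_of_splitRun_eq_Icc hrun ⟨le_of_splitRun_eq_Icc hrun, le_rfl⟩).1
  simp only [List.extract_eq_take_drop, List.length_take, List.length_drop]
  omega

theorem conn_iff_of_splitRun_eq_Icc {v₀ w : (𝓕).V} {m M : ℕ} (hrun : splitRun v₀ = Icc m M) :
    Conn (𝓕) v₀ w ↔ path w = path v₀ ∧ split w ∈ Icc m M :=
  hrun ▸ conn_iff

theorem conn_mk_of_splitRun_eq_Icc {v₀ : (𝓕).V} {m M k : ℕ} (hrun : splitRun v₀ = Icc m M)
    (hk : k ∈ Icc m M) :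
    Conn (𝓕) v₀ (mk (path v₀) k (isSplitPoint_of_splitRun_eq_Icc hrun hk)) :=
  (conn_iff_of_splitRun_eq_Icc hrun).2 ⟨path_mk _, by rwa [split_mk]⟩

theorem exists_overIso_traceHom_of_splitRun_eq_Icc {v₀ : (𝓕).V} {m M : ℕ}
    (hrun : splitRun v₀ = Icc m M) :
    ∃ (a b : Q.V) (es : List Q.E) (h : Q.IsPathFrom a b es),
      Nonempty (OverIso (componentHom (fibHom (pathPi S s₀) (coPathPi T u₀)) v₀)
        (traceHom Q a b es h)) := by
  set L := path v₀
  have hmM := le_of_splitRun_eq_Icc hrun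
  have hsplit := isSplitPoint_of_splitRun_eq_Icc hrun
  have hlen := length_extract_of_splitRun_eq_Icc hrun
  have hconn := fun w => conn_iff_of_splitRun_eq_Icc (w := w) hrun
  refine ⟨_, _, _, (isPathFrom_path v₀).extract hmM,
    nonempty_overIso_traceHom _ _ (fun w => split w.1 - m) ?_ ?_ ?_ ?_ ?_ ?_ ?_ ?_⟩
  · intro w
    obtain ⟨-, -, hk⟩ := (hconn w.1).1 w.2
    rw [hlen]
    omega
  · intro w w' h
    obtain ⟨hp, hk, -⟩ := (hconn w.1).1 w.2
    obtain ⟨hp', hk', -⟩ := (hconn w'.1).1 w'.2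
    exact Subtype.ext (eq_of_path_eq_of_split_eq (hp.trans hp'.symm) (by dsimp only at h; omega))
  · intro k hk
    rw [hlen] at hk
    refine ⟨⟨_, conn_mk_of_splitRun_eq_Icc hrun (k := m + k) ⟨by omega, by omega⟩⟩, ?_⟩
    dsimp only
    rw [split_mk]
    omega
  · intro e
    obtain ⟨-, hk, -⟩ := (hconn _).1 e.2
    show split ((𝓕).t e.1) - m = split ((𝓕).s e.1) - m + 1
    rw [split_t]
    omega
  · exact fun e e' h => Subtype.ext (eq_of_s_eq (congrArg Subtype.val h))
  · intro k hk
    rw [hlen] at hk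
    have hk₁ : m + k ∈ Icc m M := ⟨by omega, by omega⟩
    have hk₂ : m + k + 1 ∈ Icc m M := ⟨by omega, by omega⟩
    refine ⟨⟨mkEdge (hsplit hk₁) (hsplit hk₂), ?_⟩, ?_⟩
    · rw [s_mkEdge]
      exact conn_mk_of_splitRun_eq_Icc hrun hk₁
    · show split ((𝓕).s (mkEdge (hsplit hk₁) (hsplit hk₂))) - m = k
      rw [s_mkEdge, split_mk]
      omega
  · intro w
    obtain ⟨hp, hk⟩ := (hconn w.1).1 w.2
    show (fibHom (pathPi S s₀) (coPathPi T u₀)).onV w.1 = _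
    rw [fibHom_onV, hp, vertAt_extract _ _ hk.1 hk.2]
  · intro e he
    obtain ⟨hp, hk⟩ := (hconn _).1 e.2
    show (fibHom (pathPi S s₀) (coPathPi T u₀)).onE e.1 = _
    rw [fibHom_onE]
    exact (List.getElem_of_eq hp _).trans (L.getElem_extract_sub hk.1 he).symm

end PathCopathFib

end BQuiv

theorem component_pathQuiver_prod_copathQuiver_general
    (Q : BQuiv)
    (S T : Sub Q) (s₀ u₀ : Q.V) :
    ∀ v₀ : (Fib (pathPi S s₀) (coPathPi T u₀)).V,
      ∃ (a b : Q.V) (es : List Q.E) (h : Q.IsPathFrom a b es),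
        Nonempty (OverIso (componentHom (fibHom (pathPi S s₀) (coPathPi T u₀)) v₀)
          (traceHom Q a b es h)) :=
  fun v₀ => PathCopathFib.exists_overIso_traceHom_of_splitRun_eq_Icc
    (PathCopathFib.splitRun_eq_Icc v₀)

/-- Every connected component of the fiber product `P_{S,s₀} ×_Q
I_{T,u₀}` is isomorphic over `Q` to a linear quiver tracing a path of `Q`. -/
theorem component_pathQuiver_prod_copathQuiver
    (Q : BQuiv) [Fintype Q.V] [Fintype Q.E] (hQ : Q.IsAcyclic)
    (S T : Sub Q) (s₀ u₀ : Q.V)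
    (hS : S.IsUniqueSource s₀) (hT : T.IsUniqueSink u₀) :
    ∀ v₀ : (Fib (pathPi S s₀) (coPathPi T u₀)).V,
      ∃ (a b : Q.V) (es : List Q.E) (h : Q.IsPathFrom a b es),
        Nonempty (OverIso (componentHom (fibHom (pathPi S s₀) (coPathPi T u₀)) v₀)
          (traceHom Q a b es h)) :=
  component_pathQuiver_prod_copathQuiver_general Q S T s₀ u₀
end
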